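/- arXiv:2410.00315 — 5 statements merged into one kernel-verified Lean document; each statement's English description precedes it below -/
import Mathlib

section
/- Let (G, s, t) be a flow network with at least one s–t path, and let c : E → L be a capacity function taking values in a distributive lattice L. Then the join over all s–t paths P of the meet of c(e) over the edges e of P equals the meet over all s–t cuts C of the join of c(e) over the edges e crossing C; i.e., ⋁_{P∈𝒫} ⋀_{e∈P} c(e) = ⋀_{C∈𝒞} ⋁_{e crossing C} c(e). -/
open Classical

/-- A directed `s`–`t` path in the digraph with edge relation `E`: a list of
pairwise-distinct vertices beginning at `s`, ending at `t`, whose consecutive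
pairs are edges. -/
def IsSTPath {V : Type*} (E : V → V → Prop) (s t : V) (p : List V) : Prop :=
  p.Chain' E ∧ p.head? = some s ∧ p.getLast? = some t ∧ p.Nodup

/-- The list of (directed) edges traversed by a path, i.e. its consecutive pairs. -/
def pathEdges {V : Type*} (p : List V) : List (V × V) := p.zip p.tail

/-- A flow network: a finite digraph (edges given by a relation, hence no parallel
edges) without self-loops or directed cycles, with distinct source `s` and sink `t`,
all edges at `s` outgoing, all edges at `t` incoming, and every other vertex on
some directed route from `s` and to `t`. -/
structure IsFlowNetwork {V : Type*} (E : V → V → Prop) (s t : V) : Prop where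
  no_self_loop : ∀ v, ¬ E v v
  acyclic : ∀ v, ¬ Relation.TransGen E v v
  ne : s ≠ t
  source_out : ∀ v, ¬ E v s
  sink_in : ∀ v, ¬ E t v
  conn_source : ∀ v, v ≠ s → v ≠ t → Relation.ReflTransGen E s v
  conn_sink : ∀ v, v ≠ s → v ≠ t → Relation.ReflTransGen E v t

/-- The (finite) set of `s`–`t` paths, encoded as nodup vertex lists. -/
noncomputable def pathFinset {V : Type*} [Fintype V] (E : V → V → Prop) (s t : V) :
    Finset {l : List V // l.Nodup} :=
  Finset.univ.filter (fun p => IsSTPath E s t p.1)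

/-- The (finite) set of `s`–`t` cuts, encoded by the source side `S` (the sink
side being its complement). -/
noncomputable def cutFinset {V : Type*} [Fintype V] (s t : V) : Finset (Finset V) :=
  Finset.univ.filter (fun S => s ∈ S ∧ t ∉ S)

/-- The edges crossing the cut with source side `S`. -/
noncomputable def crossEdges {V : Type*} [Fintype V] (E : V → V → Prop) (S : Finset V) :
    Finset (V × V) :=
  Finset.univ.filter (fun e => E e.1 e.2 ∧ e.1 ∈ S ∧ e.2 ∉ S)

/-- Join of `f` over a finite set of edges; the junk value `j` is used only when the
set is empty (which never happens in the situations considered). -/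
noncomputable def joinOver {V L : Type*} [Lattice L] (f : V → V → L) (S : Finset (V × V))
    (j : L) : L :=
  if h : S.Nonempty then S.sup' h (fun e => f e.1 e.2) else j

/-- Meet of `f` over a finite set of edges; the junk value `j` is used only when the
set is empty (which never happens in the situations considered). -/
noncomputable def meetOver {V L : Type*} [Lattice L] (f : V → V → L) (S : Finset (V × V))
    (j : L) : L :=
  if h : S.Nonempty then S.inf' h (fun e => f e.1 e.2) else j

/-- The bottleneck value of a path: the meet of the capacities of its edges. -/
noncomputable def pathMeet {V L : Type*} [Lattice L] (c : V → V → L) (j : L) (p : List V) : L :=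
  meetOver c (pathEdges p).toFinset j

/-- The capacity of a cut: the join of the capacities of the edges crossing it. -/
noncomputable def cutJoin {V L : Type*} [Fintype V] [Lattice L] (E : V → V → Prop)
    (c : V → V → L) (j : L) (S : Finset V) : L :=
  joinOver c (crossEdges E S) j

/-- There is always at least one `s`–`t` cut (e.g. `S = {s}`). -/
lemma cutFinset_nonempty {V : Type*} [Fintype V] {s t : V} (h : s ≠ t) :
    (cutFinset s t).Nonempty :=
  ⟨{s}, by simp [cutFinset, Ne.symm h]⟩

section AuxLemmas

variable {V : Type*}

lemma pathEdges_cons_cons (a b : V) (l : List V) :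
    pathEdges (a :: b :: l) = (a, b) :: pathEdges (b :: l) := rfl

lemma mem_pathEdges_of_chain' {R : V → V → Prop} :
    ∀ {l : List V}, l.Chain' R → ∀ e ∈ pathEdges l, R e.1 e.2
  | [], _, e, he => by simp [pathEdges] at he
  | [a], _, e, he => by simp [pathEdges] at he
  | a :: b :: l, h, e, he => by
    rw [List.Chain', List.isChain_cons_cons] at h
    rw [pathEdges_cons_cons, List.mem_cons] at he
    rcases he with rfl | he
    · exact h.1
    · exact mem_pathEdges_of_chain' h.2 e he

lemma exists_crossing_edge (E : V → V → Prop) (S : Set V) :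
    ∀ (l : List V) (a b : V), l.Chain' E → l.head? = some a → a ∈ S →
      l.getLast? = some b → b ∉ S →
      ∃ e ∈ pathEdges l, E e.1 e.2 ∧ e.1 ∈ S ∧ e.2 ∉ S
  | [], a, b, _, ha, _, _, _ => by simp at ha
  | [x], a, b, _, ha, haS, hb, hbS => by
    simp at ha hb; subst ha; subst hb; exact absurd haS hbS
  | x :: y :: l, a, b, hch, ha, haS, hb, hbS => by
    simp only [List.head?_cons, Option.some.injEq] at ha
    subst ha
    rw [List.Chain', List.isChain_cons_cons] at hch
    by_cases hy : y ∈ S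
    · obtain ⟨e, he, hEe, h1, h2⟩ :=
        exists_crossing_edge E S (y :: l) y b hch.2 rfl hy
          (by rw [List.getLast?_cons_cons] at hb; exact hb) hbS
      exact ⟨e, by rw [pathEdges_cons_cons]; exact List.mem_cons_of_mem _ he, hEe, h1, h2⟩
    · exact ⟨(x, y), by rw [pathEdges_cons_cons]; exact List.mem_cons_self,
        hch.1, haS, hy⟩

lemma exists_nodup_chain_of_reflTransGen {R : V → V → Prop} {a b : V}
    (h : Relation.ReflTransGen R a b) :
    ∃ l : List V, l.Chain' R ∧ l.head? = some a ∧ l.getLast? = some b ∧ l.Nodup := by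
  induction h using Relation.ReflTransGen.head_induction_on with
  | refl => exact ⟨[b], by simp [List.Chain']⟩
  | @head a' c' hac hcb ih =>
    obtain ⟨l, hch, hh, hl, hn⟩ := ih
    by_cases ha : a' ∈ l
    · obtain ⟨l1, l2, rfl⟩ := List.append_of_mem ha
      refine ⟨a' :: l2, hch.suffix ⟨l1, rfl⟩, rfl, ?_,
        (List.sublist_append_right l1 (a' :: l2)).nodup hn⟩
      rw [List.getLast?_append] at hl
      obtain ⟨y, hy⟩ : ∃ y, (a' :: l2).getLast? = some y :=
        Option.ne_none_iff_exists'.1 (by simp)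
      rw [hy] at hl
      simp only [Option.some_or] at hl
      rw [hy, hl]
    · cases l with
      | nil => simp at hh
      | cons d l' =>
        refine ⟨a' :: d :: l', List.isChain_cons_cons.2 ⟨?_, hch⟩, rfl, ?_,
          List.nodup_cons.2 ⟨ha, hn⟩⟩
        · simp only [List.head?_cons, Option.some.injEq] at hh
          subst hh; exact hac
        · rw [List.getLast?_cons_cons]; exact hl

lemma reflTransGen_of_hits [Fintype V] {F : Finset (V × V)} {s t : V}
    (hit : ∀ C ∈ cutFinset s t, ∃ e ∈ F, e.1 ∈ C ∧ e.2 ∉ C) :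
    Relation.ReflTransGen (fun u w => (u, w) ∈ F) s t := by
  by_contra hst
  set R : V → V → Prop := fun u w => (u, w) ∈ F with hR
  set S₀ : Finset V := Finset.univ.filter (fun v => Relation.ReflTransGen R s v) with hS₀
  have hs : s ∈ S₀ := by
    simp only [hS₀, Finset.mem_filter, Finset.mem_univ, true_and]
    exact Relation.ReflTransGen.refl
  have ht : t ∉ S₀ := by simp [hS₀]; exact hst
  obtain ⟨e, heF, he1, he2⟩ := hit S₀ (by simp [cutFinset, hs, ht])
  apply he2
  simp only [hS₀, Finset.mem_filter, Finset.mem_univ, true_and] at he1 ⊢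
  exact he1.tail heF

/-- The key induction: accumulating one crossing edge per processed cut. -/
lemma key_induction {L : Type*} [Fintype V] [DistribLattice L]
    (E : V → V → Prop) (s t : V) (c : V → V → L) (j : L) (A : L) (hst : s ≠ t)
    (hpath : ∀ p : {l : List V // l.Nodup}, p ∈ pathFinset E s t → pathMeet c j p.1 ≤ A)
    (hcross : ∀ C ∈ cutFinset s t, (crossEdges E C).Nonempty) :
    ∀ 𝒮 : Finset (Finset V), 𝒮 ⊆ cutFinset s t →
      ∀ (x : L) (F : Finset (V × V)),
        (∀ e ∈ F, E e.1 e.2) → (∀ e ∈ F, x ≤ c e.1 e.2) →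
        (∀ C ∈ cutFinset s t \ 𝒮, ∃ e ∈ F, e.1 ∈ C ∧ e.2 ∉ C) →
        ∀ z : L, (∀ C ∈ 𝒮, z ≤ cutJoin E c j C) → x ⊓ z ≤ A := by
  intro 𝒮
  induction 𝒮 using Finset.induction_on with
  | empty =>
    intro _ x F hE hle hhit z _
    have hhit' : ∀ C ∈ cutFinset s t, ∃ e ∈ F, e.1 ∈ C ∧ e.2 ∉ C := by
      intro C hC; exact hhit C (by simpa using hC)
    obtain ⟨l, hch, hh, hl, hn⟩ :=
      exists_nodup_chain_of_reflTransGen (reflTransGen_of_hits hhit')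
    have hmemF : ∀ e ∈ pathEdges l, e ∈ F := fun e he =>
      mem_pathEdges_of_chain' hch e he
    have hchE : l.Chain' E := hch.imp (fun _ _ h => hE _ h)
    have hp : (⟨l, hn⟩ : {l : List V // l.Nodup}) ∈ pathFinset E s t := by
      simp only [pathFinset, Finset.mem_filter, Finset.mem_univ, true_and]
      exact ⟨hchE, hh, hl, hn⟩
    have hne : (pathEdges l).toFinset.Nonempty := by
      match l, hh, hl with
      | [a], hh, hl =>
        simp only [List.head?_cons, Option.some.injEq] at hh
        simp only [List.getLast?_singleton, Option.some.injEq] at hl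
        exact absurd (hh.symm.trans hl) hst
      | a :: b :: l, _, _ =>
        exact ⟨(a, b), by simp [pathEdges_cons_cons]⟩
    have hxm : x ≤ pathMeet c j l := by
      rw [pathMeet, meetOver, dif_pos hne]
      exact Finset.le_inf' hne _ (fun e he => hle e (hmemF e (List.mem_toFinset.1 he)))
    exact inf_le_left.trans (hxm.trans (hpath _ hp))
  | @insert C 𝒮' hC ih =>
    intro hsub x F hE hle hhit z hz
    have hCmem : C ∈ cutFinset s t := hsub (Finset.mem_insert_self _ _)
    have hne : (crossEdges E C).Nonempty := hcross C hCmem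
    have hzC : z ≤ (crossEdges E C).sup' hne (fun e => c e.1 e.2) := by
      have := hz C (Finset.mem_insert_self _ _)
      rwa [cutJoin, joinOver, dif_pos hne] at this
    have hxz : x ⊓ z = (crossEdges E C).sup' hne (fun e => x ⊓ z ⊓ c e.1 e.2) := by
      rw [← Finset.sup'_inf_distrib_left hne]
      exact (inf_eq_left.2 (inf_le_right.trans hzC)).symm
    rw [hxz]
    apply Finset.sup'_le
    intro e he
    simp only [crossEdges, Finset.mem_filter, Finset.mem_univ, true_and] at he
    have hIH := ih (fun D hD => hsub (Finset.mem_insert_of_mem hD)) (x ⊓ c e.1 e.2)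
      (insert e F)
      (fun e' he' => by
        rcases Finset.mem_insert.1 he' with rfl | he'
        · exact he.1
        · exact hE e' he')
      (fun e' he' => by
        rcases Finset.mem_insert.1 he' with rfl | he'
        · exact inf_le_right
        · exact inf_le_left.trans (hle e' he'))
      (fun D hD => by
        rcases Finset.mem_sdiff.1 hD with ⟨hD1, hD2⟩
        by_cases hDC : D = C
        · subst hDC
          exact ⟨e, Finset.mem_insert_self _ _, he.2.1, he.2.2⟩
        · obtain ⟨e', he'F, h1, h2⟩ := hhit D (Finset.mem_sdiff.2 ⟨hD1, by
            simp only [Finset.mem_insert, not_or]; exact ⟨hDC, hD2⟩⟩)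
          exact ⟨e', Finset.mem_insert_of_mem he'F, h1, h2⟩)
      z (fun D hD => hz D (Finset.mem_insert_of_mem hD))
    calc x ⊓ z ⊓ c e.1 e.2 = x ⊓ c e.1 e.2 ⊓ z := by
          rw [inf_right_comm]
      _ ≤ A := hIH

end AuxLemmas

/-- **Lattice Bottleneck Duality.** In a flow network with capacities in a
distributive lattice, the join over all `s`–`t` paths of the path bottleneck
(meet of edge capacities) equals the meet over all `s`–`t` cuts of the cut
capacity (join of crossing-edge capacities). -/
theorem lattice_bottleneck_duality {V L : Type*} [Fintype V] [DistribLattice L]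
    (E : V → V → Prop) (s t : V) (hG : IsFlowNetwork E s t) (c : V → V → L)
    (hP : (pathFinset E s t).Nonempty) :
    (pathFinset E s t).sup' hP (fun p => pathMeet c (c s t) p.1) =
      (cutFinset s t).inf' (cutFinset_nonempty hG.ne) (fun S => cutJoin E c (c s t) S) := by
  have hcross : ∀ C ∈ cutFinset s t, (crossEdges E C).Nonempty := by
    intro C hC
    simp only [cutFinset, Finset.mem_filter, Finset.mem_univ, true_and] at hC
    obtain ⟨p, hp⟩ := hP
    simp only [pathFinset, Finset.mem_filter, Finset.mem_univ, true_and] at hp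
    obtain ⟨hch, hh, hl, -⟩ := hp
    obtain ⟨e, -, hEe, h1, h2⟩ :=
      exists_crossing_edge E (↑C) p.1 s t hch hh (Finset.mem_coe.2 hC.1) hl
        (fun h => hC.2 (Finset.mem_coe.1 h))
    refine ⟨e, ?_⟩
    simp only [crossEdges, Finset.mem_filter, Finset.mem_univ, true_and]
    exact ⟨hEe, Finset.mem_coe.1 h1, fun h => h2 (Finset.mem_coe.2 h)⟩
  apply le_antisymm
  · apply Finset.sup'_le
    intro p hp
    apply Finset.le_inf'
    intro S hS
    simp only [pathFinset, Finset.mem_filter, Finset.mem_univ, true_and] at hp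
    simp only [cutFinset, Finset.mem_filter, Finset.mem_univ, true_and] at hS
    obtain ⟨hch, hh, hl, -⟩ := hp
    obtain ⟨e, heP, hEe, h1, h2⟩ :=
      exists_crossing_edge E (↑S) p.1 s t hch hh (Finset.mem_coe.2 hS.1) hl
        (fun h => hS.2 (Finset.mem_coe.1 h))
    have heC : e ∈ crossEdges E S := by
      simp only [crossEdges, Finset.mem_filter, Finset.mem_univ, true_and]
      exact ⟨hEe, Finset.mem_coe.1 h1, fun h => h2 (Finset.mem_coe.2 h)⟩
    have hne1 : (pathEdges p.1).toFinset.Nonempty := ⟨e, List.mem_toFinset.2 heP⟩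
    have hne2 : (crossEdges E S).Nonempty := ⟨e, heC⟩
    rw [pathMeet, meetOver, dif_pos hne1, cutJoin, joinOver, dif_pos hne2]
    exact (Finset.inf'_le _ (List.mem_toFinset.2 heP)).trans (Finset.le_sup' (fun e => c e.1 e.2) heC)
  · have := key_induction E s t c (c s t)
      ((pathFinset E s t).sup' hP (fun p => pathMeet c (c s t) p.1)) hG.ne
      (fun p hp => Finset.le_sup' (fun p => pathMeet c (c s t) p.1) hp) hcross (cutFinset s t) le_rfl
      ((cutFinset s t).inf' (cutFinset_nonempty hG.ne) (fun S => cutJoin E c (c s t) S))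
      ∅ (by simp) (by simp) (by simp)
      ((cutFinset s t).inf' (cutFinset_nonempty hG.ne) (fun S => cutJoin E c (c s t) S))
      (fun C hC => Finset.inf'_le _ hC)
    simpa using this
end

section
/- Let G=(V,E) be a finite directed graph with distinct vertices s,t ∈ V having at least one s–t path, and let c : E → ℝ be a capacity function with c(e) > 0 for all e. Then max_{P∈𝒫} min_{e∈P} c(e) = min_{C∈𝒞} max_{e crossing C} c(e), where 𝒫 is the (finite, nonempty) set of s–t paths and 𝒞 the (finite, nonempty) set of s–t cuts. -/
open Classical

section Aux

variable {V : Type*}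

lemma chain'_rel_of_mem_zip {E : V → V → Prop} :
    ∀ (p : List V), p.Chain' E → ∀ a b : V, (a, b) ∈ p.zip p.tail → E a b
  | [] => by simp
  | [x] => by simp
  | x :: y :: r => by
    intro h a b hm
    rw [List.Chain', List.isChain_cons_cons] at h
    simp only [List.tail_cons, List.zip_cons_cons, List.mem_cons, Prod.mk.injEq] at hm
    rcases hm with ⟨rfl, rfl⟩ | hm
    · exact h.1
    · exact chain'_rel_of_mem_zip (y :: r) h.2 a b hm

lemma exists_cross_edge {E : V → V → Prop} (S : Set V) :
    ∀ (p : List V), p.Chain' E → ∀ u w : V, p.head? = some u → p.getLast? = some w →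
      u ∈ S → w ∉ S → ∃ a b : V, (a, b) ∈ p.zip p.tail ∧ E a b ∧ a ∈ S ∧ b ∉ S
  | [] => by simp
  | [x] => by
    intro _ u w hu hw hS hT
    simp only [List.head?_cons, Option.some.injEq] at hu
    simp only [List.getLast?_singleton, Option.some.injEq] at hw
    subst hu; subst hw; exact absurd hS hT
  | x :: y :: r => by
    intro h u w hu hw hS hT
    rw [List.Chain', List.isChain_cons_cons] at h
    simp only [List.head?_cons, Option.some.injEq] at hu
    subst hu
    by_cases hy : y ∈ S
    · obtain ⟨a, b, hm, he, ha, hb⟩ := exists_cross_edge S (y :: r) h.2 y w rfl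
        (by simpa using hw) hy hT
      refine ⟨a, b, ?_, he, ha, hb⟩
      show (a, b) ∈ (x, y) :: (y :: r).zip r
      exact List.mem_cons_of_mem _ (by simpa using hm)
    · exact ⟨x, y, by simp, h.1, hS, hy⟩

lemma reach_nodup_path {R : V → V → Prop} {s v : V} (h : Relation.ReflTransGen R s v) :
    ∃ q : List V, q.Chain' R ∧ q.head? = some s ∧ q.getLast? = some v ∧ q.Nodup := by
  induction h with
  | refl => exact ⟨[s], by simp [List.Chain']⟩
  | @tail u w hsu huw ih =>
    obtain ⟨q, hch, hh, hl, hnd⟩ := ih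
    by_cases hv : w ∈ q
    · obtain ⟨a, b, rfl⟩ := List.append_of_mem hv
      refine ⟨a ++ [w], ?_, ?_, List.getLast?_concat, ?_⟩
      · exact hch.prefix ⟨b, by simp⟩
      · rw [← hh, List.head?_append, List.head?_append]
        simp
      · exact hnd.sublist (by simp)
    · refine ⟨q ++ [w], ?_, ?_, List.getLast?_concat, ?_⟩
      · refine List.IsChain.append hch (by simp) ?_
        intro x hx y hy
        simp only [List.head?_cons, Option.mem_def, Option.some.injEq] at hy
        rw [Option.mem_def, hl] at hx
        cases hx; cases hy; exact huw
      · have : q ≠ [] := by rintro rfl; simp at hh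
        rw [List.head?_append, hh]; rfl
      · simp [List.nodup_append, hnd, hv]
        rintro a ha rfl; exact hv ha

end Aux

lemma pathEdges_toFinset_nonempty {V : Type*} {s t : V} (hst : s ≠ t) :
    ∀ (q : List V), q.head? = some s → q.getLast? = some t →
      (pathEdges q).toFinset.Nonempty
  | [] => by simp
  | [x] => by
    intro hh hl
    simp only [List.head?_cons, Option.some.injEq] at hh
    simp only [List.getLast?_singleton, Option.some.injEq] at hl
    exact absurd (hh.symm.trans hl) hst
  | x :: y :: r => fun _ _ => ⟨(x, y), by simp [pathEdges]⟩

/-- **Classical bottleneck duality.** In a finite digraph with distinct `s`, `t`, at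
least one `s`–`t` path, and positive real capacities on edges, the maximum over
`s`–`t` paths of the minimum edge capacity equals the minimum over `s`–`t` cuts of
the maximum crossing-edge capacity. (On `ℝ`, `⊓`/`⊔` are `min`/`max`, so
`Finset.inf'`/`Finset.sup'` are the minimum/maximum over a finite nonempty set.) -/
theorem real_bottleneck_duality {V : Type*} [Fintype V]
    (E : V → V → Prop) (s t : V) (hst : s ≠ t)
    (c : V → V → ℝ) (hc : ∀ u v, E u v → 0 < c u v)
    (hP : (pathFinset E s t).Nonempty) :
    (pathFinset E s t).sup' hP (fun p => pathMeet c (c s t) p.1) =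
      (cutFinset s t).inf' (cutFinset_nonempty hst) (fun S => cutJoin E c (c s t) S) := by
  set M := (pathFinset E s t).sup' hP (fun p => pathMeet c (c s t) p.1) with hM
  apply le_antisymm
  · apply Finset.sup'_le
    intro p hp
    apply Finset.le_inf'
    intro S hS
    simp only [cutFinset, Finset.mem_filter, Finset.mem_univ, true_and] at hS
    have hpath : IsSTPath E s t p.1 := by
      simpa [pathFinset] using hp
    obtain ⟨hch, hh, hl, hnd⟩ := hpath
    obtain ⟨a, b, hm, he, ha, hb⟩ := exists_cross_edge (↑S : Set V) p.1 hch s t hh hl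
      (by simpa using hS.1) (by simpa using hS.2)
    have hcross : (a, b) ∈ crossEdges E S := by
      simp only [crossEdges, Finset.mem_filter, Finset.mem_univ, true_and]
      exact ⟨he, by simpa using ha, by simpa using hb⟩
    have hne : (crossEdges E S).Nonempty := ⟨_, hcross⟩
    have hne2 : ((pathEdges p.1).toFinset).Nonempty := ⟨(a, b), by simp [pathEdges, hm]⟩
    rw [cutJoin, joinOver, dif_pos hne, pathMeet, meetOver, dif_pos hne2]
    calc ((pathEdges p.1).toFinset).inf' hne2 (fun e => c e.1 e.2) ≤ c a b :=
          Finset.inf'_le (fun e : V × V => c e.1 e.2)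
            (show ((a, b) : V × V) ∈ _ by simp [pathEdges, hm])
      _ ≤ _ := Finset.le_sup' (fun e : V × V => c e.1 e.2) hcross
  · set R : V → V → Prop := fun u v => E u v ∧ M < c u v with hR
    set S : Finset V := Finset.univ.filter (fun v => Relation.ReflTransGen R s v) with hSdef
    have hsS : s ∈ S := by
      simp only [hSdef, Finset.mem_filter, Finset.mem_univ, true_and]
      exact Relation.ReflTransGen.refl
    have htS : t ∉ S := by
      simp only [hSdef, Finset.mem_filter, Finset.mem_univ, true_and]
      intro hreach
      obtain ⟨q, hch, hh, hl, hnd⟩ := reach_nodup_path hreach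
      have hq : (⟨q, hnd⟩ : {l : List V // l.Nodup}) ∈ pathFinset E s t := by
        simp only [pathFinset, Finset.mem_filter, Finset.mem_univ, true_and]
        exact ⟨hch.imp (fun {a b} h => h.1), hh, hl, hnd⟩
      have hedges := pathEdges_toFinset_nonempty hst q hh hl
      have h1 : pathMeet c (c s t) q ≤ M :=
        Finset.le_sup' (fun p : {l : List V // l.Nodup} => pathMeet c (c s t) p.1) hq
      have h2 : M < pathMeet c (c s t) q := by
        rw [pathMeet, meetOver, dif_pos hedges, Finset.lt_inf'_iff]
        intro e he
        have hmem : (e.1, e.2) ∈ q.zip q.tail := by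
          simpa [pathEdges] using he
        exact (chain'_rel_of_mem_zip q hch e.1 e.2 hmem).2
      exact absurd h1 (not_le.mpr h2)
    have hScut : S ∈ cutFinset s t := by
      simp only [cutFinset, Finset.mem_filter, Finset.mem_univ, true_and]
      exact ⟨hsS, htS⟩
    refine le_trans (Finset.inf'_le _ hScut) ?_
    obtain ⟨p, hp⟩ := hP
    have hpath : IsSTPath E s t p.1 := by
      simpa [pathFinset] using hp
    obtain ⟨hch, hh, hl, hnd⟩ := hpath
    obtain ⟨a, b, hm, he, ha, hb⟩ := exists_cross_edge (↑S : Set V) p.1 hch s t hh hl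
      (by simpa using hsS) (by simpa using htS)
    have hne : (crossEdges E S).Nonempty := by
      refine ⟨(a, b), ?_⟩
      simp only [crossEdges, Finset.mem_filter, Finset.mem_univ, true_and]
      exact ⟨he, by simpa using ha, by simpa using hb⟩
    rw [cutJoin, joinOver, dif_pos hne]
    apply Finset.sup'_le
    intro e heC
    simp only [crossEdges, Finset.mem_filter, Finset.mem_univ, true_and] at heC
    obtain ⟨heE, he1, he2⟩ := heC
    by_contra hlt
    push_neg at hlt
    apply he2
    simp only [hSdef, Finset.mem_filter, Finset.mem_univ, true_and] at he1 ⊢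
    exact he1.tail ⟨heE, hlt⟩
end

section
/- Let (G, s, t) be a flow network with at least one s–t path and let c : E → L be a capacity function into a distributive lattice L. Then the element ⋀_{C∈𝒞} cap(C), the meet over all s–t cuts C of the cut capacities, is the least upper bound of the set {val(φ) : φ is an L-valued flow on G}. -/
open Classical

/-- The edges of the digraph entering the vertex `v`. -/
noncomputable def edgesInto {V : Type*} [Fintype V] (E : V → V → Prop) (v : V) :
    Finset (V × V) :=
  Finset.univ.filter (fun e => E e.1 e.2 ∧ e.2 = v)

/-- The edges of the digraph leaving the vertex `v`. -/
noncomputable def edgesOutOf {V : Type*} [Fintype V] (E : V → V → Prop) (v : V) :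
    Finset (V × V) :=
  Finset.univ.filter (fun e => E e.1 e.2 ∧ e.1 = v)

/-- An `L`-valued flow: `φ` respects the capacities, and at every vertex other than
`s` and `t` the join of `φ` over incoming edges equals the join over outgoing edges
(in a flow network both of these edge sets are nonempty, so the junk value of
`joinOver` is never used). -/
def IsLFlow {V L : Type*} [Fintype V] [Lattice L] (E : V → V → Prop) (s t : V)
    (c φ : V → V → L) : Prop :=
  (∀ u v, E u v → φ u v ≤ c u v) ∧
  (∀ v, v ≠ s → v ≠ t →
    joinOver φ (edgesInto E v) (φ s t) = joinOver φ (edgesOutOf E v) (φ s t))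

/-- The value of a flow: the join of `φ` over the edges leaving the source `s`
(nonempty as soon as there is an `s`–`t` path, so the junk value is never used). -/
noncomputable def flowVal {V L : Type*} [Fintype V] [Lattice L] (E : V → V → Prop)
    (s t : V) (φ : V → V → L) : L :=
  joinOver φ (edgesOutOf E s) (φ s t)


section Helpers
variable {V : Type*} {E : V → V → Prop}

lemma chain'_pair : ∀ {l : List V}, l.Chain' E → ∀ {a b : V}, (a, b) ∈ l.zip l.tail → E a b
  | [], _, _, _, h => by simp at h
  | [x], _, _, _, h => by simp at h
  | x :: y :: l, hc, a, b, h => by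
    rw [List.Chain', List.isChain_cons_cons] at hc
    rcases List.mem_cons.1 h with h | h
    · obtain ⟨rfl, rfl⟩ := Prod.mk.injEq .. ▸ (Prod.ext_iff.1 h)
      exact hc.1
    · exact chain'_pair hc.2 h

lemma chain'_transGen : ∀ {l : List V} {a : V}, (a :: l).Chain' E → ∀ b ∈ l, Relation.TransGen E a b
  | [], a, _, b, hb => by simp at hb
  | x :: l, a, hc, b, hb => by
    rw [List.Chain', List.isChain_cons_cons] at hc
    rcases List.mem_cons.1 hb with rfl | hb
    · exact Relation.TransGen.single hc.1
    · exact (Relation.TransGen.single hc.1).trans (chain'_transGen hc.2 b hb)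

lemma chain'_nodup (hacyc : ∀ v, ¬ Relation.TransGen E v v) :
    ∀ {l : List V}, l.Chain' E → l.Nodup
  | [], _ => List.nodup_nil
  | a :: l, hc => by
    refine List.nodup_cons.2 ⟨fun ha => hacyc a (chain'_transGen hc a ha), ?_⟩
    exact chain'_nodup hacyc hc.tail

lemma exists_chain_of_reflTransGen {a b : V} (h : Relation.ReflTransGen E a b) :
    ∃ l : List V, l.Chain' E ∧ l.head? = some a ∧ l.getLast? = some b := by
  induction h using Relation.ReflTransGen.head_induction_on with
  | refl => exact ⟨[b], by simp [List.Chain']⟩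
  | head hac _ ih =>
    obtain ⟨l, hc, hh, hl⟩ := ih
    obtain ⟨c, l, rfl⟩ : ∃ c l', l = c :: l' := by
      cases l with | nil => simp at hh | cons c l' => exact ⟨c, l', rfl⟩
    rw [List.head?_cons, Option.some_inj] at hh
    subst hh
    exact ⟨_ :: _ :: _, List.isChain_cons_cons.2 ⟨hac, hc⟩, rfl, by simpa using hl⟩

end Helpers

section Helpers
variable {V : Type*} {E : V → V → Prop}

lemma pathEdges_cons₂ (x y : V) (l : List V) :
    pathEdges (x :: y :: l) = (x, y) :: pathEdges (y :: l) := rfl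

lemma mem_pathEdges_cons {e : V × V} {l : List V} (h : e ∈ pathEdges l) (x : V) :
    e ∈ pathEdges (x :: l) := by
  cases l with
  | nil => simp [pathEdges] at h
  | cons y l => rw [pathEdges_cons₂]; exact List.mem_cons_of_mem _ h

lemma mem_pathEdges_append (u v : V) (l2 : List V) :
    ∀ l1 : List V, (u, v) ∈ pathEdges ((l1 ++ [u]) ++ v :: l2)
  | [] => by rw [List.nil_append, List.singleton_append, pathEdges_cons₂]; exact List.mem_cons_self
  | x :: l1 => by
    have := mem_pathEdges_append u v l2 l1
    simpa using mem_pathEdges_cons (by simpa using this) x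

lemma mem_of_mem_pathEdges {a b : V} {l : List V} (h : (a, b) ∈ pathEdges l) :
    a ∈ l ∧ b ∈ l := by
  have := List.of_mem_zip h
  exact ⟨this.1, List.mem_of_mem_tail this.2⟩

lemma exists_concat_of_getLast? {l : List V} {a : V} (h : l.getLast? = some a) :
    ∃ l', l = l' ++ [a] := by
  cases l with
  | nil => simp at h
  | cons x l =>
    refine ⟨(x :: l).dropLast, ?_⟩
    have hne : x :: l ≠ [] := by simp
    have := List.dropLast_append_getLast hne
    rw [List.getLast?_eq_getLast hne, Option.some_inj] at h
    rw [← h]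
    exact this.symm

lemma exists_cons_of_head? {l : List V} {a : V} (h : l.head? = some a) :
    ∃ l', l = a :: l' := by
  cases l with
  | nil => simp at h
  | cons x l => rw [List.head?_cons, Option.some_inj] at h; exact ⟨l, by rw [h]⟩

end Helpers
section Helpers2
variable {V : Type*} [Fintype V] {E : V → V → Prop} {s t : V}

lemma isSTPath_shape (hG : IsFlowNetwork E s t) {p : List V} (hp : IsSTPath E s t p) :
    ∃ b l, p = s :: b :: l := by
  obtain ⟨l', rfl⟩ := exists_cons_of_head? hp.2.1
  cases l' with
  | nil =>
    exfalso
    have : (s : V) = t := by simpa using hp.2.2.1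
    exact hG.ne this
  | cons b l => exact ⟨b, l, rfl⟩

/-- Every edge of a flow network lies on some `s`–`t` path. -/
lemma edge_on_path (hG : IsFlowNetwork E s t) {u v : V} (hE : E u v) :
    ∃ p : {l : List V // l.Nodup}, p ∈ pathFinset E s t ∧ (u, v) ∈ pathEdges p.1 := by
  have hu_t : u ≠ t := fun h => hG.sink_in v (h ▸ hE)
  have hv_s : v ≠ s := fun h => hG.source_out u (h ▸ hE)
  -- walk from s to u
  obtain ⟨ws, hws_c, hws_h, hws_l⟩ : ∃ l : List V, l.Chain' E ∧ l.head? = some s ∧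
      l.getLast? = some u := by
    by_cases hus : u = s
    · exact ⟨[s], by simp [hus, List.Chain']⟩
    · exact exists_chain_of_reflTransGen (hG.conn_source u hus hu_t)
  obtain ⟨wt, hwt_c, hwt_h, hwt_l⟩ : ∃ l : List V, l.Chain' E ∧ l.head? = some v ∧
      l.getLast? = some t := by
    by_cases hvt : v = t
    · exact ⟨[t], by simp [hvt, List.Chain']⟩
    · exact exists_chain_of_reflTransGen (hG.conn_sink v hv_s hvt)
  obtain ⟨xs, rfl⟩ := exists_concat_of_getLast? hws_l
  obtain ⟨ys, rfl⟩ := exists_cons_of_head? hwt_h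
  set l : List V := (xs ++ [u]) ++ v :: ys with hl
  have hchain : l.Chain' E := by
    rw [List.Chain', List.isChain_append]
    refine ⟨hws_c, hwt_c, ?_⟩
    intro x hx y hy
    simp at hx hy
    subst hx; subst hy; exact hE
  have hnodup : l.Nodup := chain'_nodup hG.acyclic hchain
  have hhead : l.head? = some s := by
    rw [hl, List.head?_append_of_ne_nil]
    · exact hws_h
    · simp
  have hlast : l.getLast? = some t := by
    rw [hl, List.getLast?_append_of_ne_nil]
    · exact hwt_l
    · simp
  refine ⟨⟨l, hnodup⟩, ?_, mem_pathEdges_append u v ys xs⟩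
  simp only [pathFinset, Finset.mem_filter, Finset.mem_univ, true_and]
  exact ⟨hchain, hhead, hlast, hnodup⟩

/-- An interior vertex of an `s`–`t` path has an in-edge and an out-edge on the path. -/
lemma interior_edges (hp : IsSTPath E s t p) {v : V} (hv : v ∈ p) (hvs : v ≠ s) (hvt : v ≠ t) :
    (∃ a, E a v ∧ (a, v) ∈ pathEdges p) ∧ (∃ b, E v b ∧ (v, b) ∈ pathEdges p) := by
  obtain ⟨l1, l2, rfl⟩ := List.append_of_mem hv
  have hl1 : l1 ≠ [] := by
    rintro rfl
    exact hvs (by simpa using hp.2.1)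
  have hl2 : l2 ≠ [] := by
    rintro rfl
    have h2 : (l1 ++ [v]).getLast? = some t := hp.2.2.1
    rw [List.getLast?_concat] at h2
    exact hvt (by simpa using h2)
  obtain ⟨xs, a, hxa⟩ := l1.eq_nil_or_concat.resolve_left hl1
  rw [List.concat_eq_append] at hxa
  subst hxa
  obtain ⟨b, l2', rfl⟩ : ∃ b l2', l2 = b :: l2' := by
    cases l2 with
    | nil => exact absurd rfl hl2
    | cons b l2' => exact ⟨b, l2', rfl⟩
  have hav : (a, v) ∈ pathEdges ((xs ++ [a]) ++ v :: b :: l2') := mem_pathEdges_append _ _ _ _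
  have hvb : (v, b) ∈ pathEdges ((xs ++ [a]) ++ v :: b :: l2') := by
    have : ((xs ++ [a]) ++ v :: b :: l2') = (((xs ++ [a]) ++ [v]) ++ b :: l2') := by simp
    rw [this]
    exact mem_pathEdges_append _ _ _ _
  exact ⟨⟨a, chain'_pair hp.1 hav, hav⟩, ⟨b, chain'_pair hp.1 hvb, hvb⟩⟩

lemma edgesInto_nonempty (hG : IsFlowNetwork E s t) {v : V} (hvs : v ≠ s) (hvt : v ≠ t) :
    (edgesInto E v).Nonempty := by
  rcases (hG.conn_source v hvs hvt).cases_tail with h | ⟨c, _, hc⟩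
  · exact absurd h hvs
  · exact ⟨(c, v), by simp [edgesInto, hc]⟩

lemma edgesOutOf_nonempty (hG : IsFlowNetwork E s t) {v : V} (hvs : v ≠ s) (hvt : v ≠ t) :
    (edgesOutOf E v).Nonempty := by
  rcases (hG.conn_sink v hvs hvt).cases_head with h | ⟨c, hc, _⟩
  · exact absurd h hvt
  · exact ⟨(v, c), by simp [edgesOutOf, hc]⟩

lemma edgesOutOf_source_nonempty (hG : IsFlowNetwork E s t)
    (hP : (pathFinset E s t).Nonempty) : (edgesOutOf E s).Nonempty := by
  obtain ⟨p, hp⟩ := hP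
  simp only [pathFinset, Finset.mem_filter] at hp
  obtain ⟨b, l, hbl⟩ := isSTPath_shape hG hp.2
  have : E s b := by
    have := hp.2.1
    rw [hbl, List.Chain', List.isChain_cons_cons] at this
    exact this.1
  exact ⟨(s, b), by simp [edgesOutOf, this]⟩

/-- A chain starting inside `S` and ending outside `S` crosses `S`. -/
lemma chain_crosses (S : Finset V) :
    ∀ (l : List V), l.Chain' E → ∀ {a b : V}, l.head? = some a → l.getLast? = some b →
      a ∈ S → b ∉ S → ∃ e ∈ pathEdges l, E e.1 e.2 ∧ e.1 ∈ S ∧ e.2 ∉ S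
  | [], _, a, b, h, _, _, _ => by simp at h
  | [x], _, a, b, ha, hb, haS, hbS => by
    simp only [List.head?_cons, Option.some_inj] at ha
    simp only [List.getLast?_singleton, Option.some_inj] at hb
    exact absurd (ha ▸ haS) (hb ▸ hbS)
  | x :: y :: l, hc, a, b, ha, hb, haS, hbS => by
    rw [List.head?_cons, Option.some_inj] at ha
    subst ha
    rw [List.Chain', List.isChain_cons_cons] at hc
    by_cases hyS : y ∈ S
    · obtain ⟨e, he, hee⟩ := chain_crosses S (y :: l) hc.2 rfl (by simpa using hb) hyS hbS
      exact ⟨e, mem_pathEdges_cons he x, hee⟩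
    · exact ⟨(x, y), by rw [pathEdges_cons₂]; exact List.mem_cons_self, hc.1, haS, hyS⟩

lemma crossEdges_nonempty (hG : IsFlowNetwork E s t) (hP : (pathFinset E s t).Nonempty)
    {S : Finset V} (hS : S ∈ cutFinset s t) : (crossEdges E S).Nonempty := by
  obtain ⟨p, hp⟩ := hP
  simp only [pathFinset, Finset.mem_filter] at hp
  simp only [cutFinset, Finset.mem_filter, Finset.mem_univ, true_and] at hS
  obtain ⟨e, _, hee⟩ := chain_crosses S p.1 hp.2.1 hp.2.2.1 hp.2.2.2.1 hS.1 hS.2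
  exact ⟨e, by simpa [crossEdges] using hee⟩

end Helpers2
section Helpers3
variable {V L : Type*} [Fintype V] [DistribLattice L] {E : V → V → Prop} {s t : V}

lemma joinOver_eq {f : V → V → L} {S : Finset (V × V)} (h : S.Nonempty) (j : L) :
    joinOver f S j = S.sup' h (fun e => f e.1 e.2) := dif_pos h

lemma meetOver_eq {f : V → V → L} {S : Finset (V × V)} (h : S.Nonempty) (j : L) :
    meetOver f S j = S.inf' h (fun e => f e.1 e.2) := dif_pos h

lemma pathMeet_le {c : V → V → L} {j : L} {p : List V} {e : V × V} (he : e ∈ pathEdges p) :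
    pathMeet c j p ≤ c e.1 e.2 := by
  have hne : (pathEdges p).toFinset.Nonempty := ⟨e, List.mem_toFinset.2 he⟩
  rw [pathMeet, meetOver_eq hne]
  exact Finset.inf'_le _ (List.mem_toFinset.2 he)

/-- The canonical maximum flow: on each edge, the join of the bottleneck values of
the `s`–`t` paths through that edge. -/
noncomputable def maxFlow (E : V → V → Prop) (s t : V) (c : V → V → L) : V → V → L :=
  fun u v =>
    if h : ((pathFinset E s t).filter (fun p => (u, v) ∈ pathEdges p.1)).Nonempty
    then ((pathFinset E s t).filter (fun p => (u, v) ∈ pathEdges p.1)).sup' h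
      (fun p => pathMeet c (c s t) p.1)
    else c u v

lemma maxFlow_le (c : V → V → L) (u v : V) : maxFlow E s t c u v ≤ c u v := by
  simp only [maxFlow]
  split_ifs with h
  · apply Finset.sup'_le
    intro p hp
    exact pathMeet_le (Finset.mem_filter.1 hp).2
  · exact le_rfl

/-- The master lemma computing joins of `maxFlow` over edge sets. -/
lemma sup'_maxFlow (hG : IsFlowNetwork E s t) (c : V → V → L)
    {A : Finset (V × V)} (hA : A.Nonempty) (hAedge : ∀ e ∈ A, E e.1 e.2)
    {T : Finset {l : List V // l.Nodup}} (hT : T.Nonempty) (hTsub : T ⊆ pathFinset E s t)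
    (h1 : ∀ e ∈ A, ∀ p, p ∈ pathFinset E s t → e ∈ pathEdges p.1 → p ∈ T)
    (h2 : ∀ p ∈ T, ∃ e ∈ A, e ∈ pathEdges p.1) :
    A.sup' hA (fun e => maxFlow E s t c e.1 e.2) =
      T.sup' hT (fun p => pathMeet c (c s t) p.1) := by
  apply le_antisymm
  · apply Finset.sup'_le
    intro e he
    obtain ⟨q, hq, hqe⟩ := edge_on_path hG (hAedge e he)
    have hne : ((pathFinset E s t).filter (fun p => (e.1, e.2) ∈ pathEdges p.1)).Nonempty :=
      ⟨q, Finset.mem_filter.2 ⟨hq, hqe⟩⟩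
    simp only [maxFlow]
    rw [dif_pos hne]
    apply Finset.sup'_le
    intro p hp
    rw [Finset.mem_filter] at hp
    exact Finset.le_sup' (f := fun p : {l : List V // l.Nodup} => pathMeet c (c s t) p.1) (h1 e he p hp.1 hp.2)
  · apply Finset.sup'_le
    intro p hp
    obtain ⟨e, heA, hep⟩ := h2 p hp
    have hne : ((pathFinset E s t).filter (fun q => (e.1, e.2) ∈ pathEdges q.1)).Nonempty :=
      ⟨p, Finset.mem_filter.2 ⟨hTsub hp, hep⟩⟩
    have h3 : pathMeet c (c s t) p.1 ≤ maxFlow E s t c e.1 e.2 := by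
      simp only [maxFlow]
      rw [dif_pos hne]
      exact Finset.le_sup' (f := fun p : {l : List V // l.Nodup} => pathMeet c (c s t) p.1)
        (Finset.mem_filter.2 ⟨hTsub hp, hep⟩)
    exact le_trans h3 (Finset.le_sup' (f := fun e : V × V => maxFlow E s t c e.1 e.2) heA)

lemma maxFlow_isFlow (hG : IsFlowNetwork E s t) (c : V → V → L) :
    IsLFlow E s t c (maxFlow E s t c) := by
  constructor
  · intro u v _
    exact maxFlow_le c u v
  · intro v hvs hvt
    have hIn := edgesInto_nonempty hG hvs hvt
    have hOut := edgesOutOf_nonempty hG hvs hvt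
    set T : Finset {l : List V // l.Nodup} :=
      (pathFinset E s t).filter (fun p => v ∈ p.1) with hTdef
    have hTsub : T ⊆ pathFinset E s t := Finset.filter_subset _ _
    have hT : T.Nonempty := by
      obtain ⟨e, he⟩ := hIn
      simp only [edgesInto, Finset.mem_filter, Finset.mem_univ, true_and] at he
      obtain ⟨q, hq, hqe⟩ := edge_on_path hG he.1
      refine ⟨q, Finset.mem_filter.2 ⟨hq, ?_⟩⟩
      have := (mem_of_mem_pathEdges hqe).2
      rwa [he.2] at this
    rw [joinOver_eq hIn, joinOver_eq hOut]
    rw [sup'_maxFlow hG c hIn (fun e he => by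
          simp only [edgesInto, Finset.mem_filter, Finset.mem_univ, true_and] at he
          exact he.1) hT hTsub
        (fun e he p hp hep => by
          simp only [edgesInto, Finset.mem_filter, Finset.mem_univ, true_and] at he
          refine Finset.mem_filter.2 ⟨hp, ?_⟩
          have := (mem_of_mem_pathEdges (a := e.1) (b := e.2) hep).2
          rwa [he.2] at this)
        (fun p hp => by
          rw [hTdef, Finset.mem_filter] at hp
          have hstp : IsSTPath E s t p.1 := by
            have := hp.1
            simp only [pathFinset, Finset.mem_filter, Finset.mem_univ, true_and] at this
            exact this
          obtain ⟨⟨a, haE, hav⟩, _⟩ := interior_edges hstp hp.2 hvs hvt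
          exact ⟨(a, v), by simp [edgesInto, haE], hav⟩)]
    rw [sup'_maxFlow hG c hOut (fun e he => by
          simp only [edgesOutOf, Finset.mem_filter, Finset.mem_univ, true_and] at he
          exact he.1) hT hTsub
        (fun e he p hp hep => by
          simp only [edgesOutOf, Finset.mem_filter, Finset.mem_univ, true_and] at he
          refine Finset.mem_filter.2 ⟨hp, ?_⟩
          have := (mem_of_mem_pathEdges (a := e.1) (b := e.2) hep).1
          rwa [he.2] at this)
        (fun p hp => by
          rw [hTdef, Finset.mem_filter] at hp
          have hstp : IsSTPath E s t p.1 := by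
            have := hp.1
            simp only [pathFinset, Finset.mem_filter, Finset.mem_univ, true_and] at this
            exact this
          obtain ⟨_, ⟨b, hbE, hvb⟩⟩ := interior_edges hstp hp.2 hvs hvt
          exact ⟨(v, b), by simp [edgesOutOf, hbE], hvb⟩)]

lemma maxFlow_val (hG : IsFlowNetwork E s t) (c : V → V → L)
    (hP : (pathFinset E s t).Nonempty) :
    flowVal E s t (maxFlow E s t c) =
      (pathFinset E s t).sup' hP (fun p => pathMeet c (c s t) p.1) := by
  have hOut := edgesOutOf_source_nonempty hG hP
  rw [flowVal, joinOver_eq hOut]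
  refine sup'_maxFlow hG c hOut (fun e he => by
      simp only [edgesOutOf, Finset.mem_filter, Finset.mem_univ, true_and] at he
      exact he.1) hP le_rfl (fun e _ p hp _ => hp) ?_
  intro p hp
  have hstp : IsSTPath E s t p.1 := by
    have := hp
    simp only [pathFinset, Finset.mem_filter, Finset.mem_univ, true_and] at this
    exact this
  obtain ⟨b, l, hbl⟩ := isSTPath_shape hG hstp
  have hEsb : E s b := by
    have := hstp.1
    rw [hbl, List.Chain', List.isChain_cons_cons] at this
    exact this.1
  refine ⟨(s, b), by simp [edgesOutOf, hEsb], ?_⟩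
  rw [hbl, pathEdges_cons₂]
  exact List.mem_cons_self

/-- Any flow value is bounded by any cut capacity. -/
lemma flowVal_le_cutJoin (hG : IsFlowNetwork E s t) (hP : (pathFinset E s t).Nonempty)
    {c φ : V → V → L} (hφ : IsLFlow E s t c φ) {S : Finset V} (hS : S ∈ cutFinset s t) :
    flowVal E s t φ ≤ cutJoin E c (c s t) S := by
  have hcross := crossEdges_nonempty hG hP hS
  simp only [cutFinset, Finset.mem_filter, Finset.mem_univ, true_and] at hS
  obtain ⟨hsS, htS⟩ := hS
  set X := (crossEdges E S).sup' hcross (fun e => φ e.1 e.2) with hX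
  have wf : WellFounded (fun a b : V => Relation.TransGen E b a) := by
    have h1 : IsTrans V (fun a b => Relation.TransGen E b a) :=
      ⟨fun a b c h1 h2 => h2.trans h1⟩
    have h2 : IsIrrefl V (fun a b => Relation.TransGen E b a) :=
      ⟨fun a h => hG.acyclic a h⟩
    exact Finite.wellFounded_of_trans_of_irrefl _
  have claim : ∀ v : V, v ∈ S → v ≠ t → ∀ hv : (edgesOutOf E v).Nonempty,
      (edgesOutOf E v).sup' hv (fun e => φ e.1 e.2) ≤ X := by
    refine fun v => wf.induction (C := fun v => v ∈ S → v ≠ t →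
      ∀ hv : (edgesOutOf E v).Nonempty,
        (edgesOutOf E v).sup' hv (fun e => φ e.1 e.2) ≤ X) v ?_
    intro v IH hvS hvt hv
    apply Finset.sup'_le
    rintro ⟨a, b⟩ he
    simp only [edgesOutOf, Finset.mem_filter, Finset.mem_univ, true_and] at he
    obtain ⟨hab, rfl⟩ := he
    show φ a b ≤ X
    by_cases hbS : b ∈ S
    · have hbt : b ≠ t := fun h => htS (h ▸ hbS)
      have hbs : b ≠ s := fun h => hG.source_out a (h ▸ hab)
      have hIn : (edgesInto E b).Nonempty := ⟨(a, b), by simp [edgesInto, hab]⟩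
      have hOut : (edgesOutOf E b).Nonempty := edgesOutOf_nonempty hG hbs hbt
      have hcons := hφ.2 b hbs hbt
      rw [joinOver_eq hIn, joinOver_eq hOut] at hcons
      calc φ a b ≤ (edgesInto E b).sup' hIn (fun e => φ e.1 e.2) :=
            Finset.le_sup' (f := fun e : V × V => φ e.1 e.2) ((by simp only [edgesInto, Finset.mem_filter, Finset.mem_univ, true_and]; exact ⟨hab, trivial⟩) : (a, b) ∈ edgesInto E b)
        _ = (edgesOutOf E b).sup' hOut (fun e => φ e.1 e.2) := hcons
        _ ≤ X := IH b (Relation.TransGen.single hab) hbS hbt hOut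
    · exact Finset.le_sup' (f := fun e : V × V => φ e.1 e.2)
        (by simp [crossEdges, hab, hvS, hbS] : ((a, b) ∈ crossEdges E S))
  have hOuts := edgesOutOf_source_nonempty hG hP
  have hmain := claim s hsS hG.ne hOuts
  rw [flowVal, joinOver_eq hOuts]
  refine le_trans hmain ?_
  rw [cutJoin, joinOver_eq hcross]
  apply Finset.sup'_le
  intro e he
  have heE : E e.1 e.2 := by
    simp only [crossEdges, Finset.mem_filter, Finset.mem_univ, true_and] at he
    exact he.1
  exact le_trans (hφ.1 e.1 e.2 heE) (Finset.le_sup' (f := fun e : V × V => c e.1 e.2) he)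

end Helpers3
section Prime
variable {L : Type*} [DistribLattice L]

lemma exists_mem_of_P_sup' {α : Type*} {P : L → Prop}
    (hor : ∀ x y : L, P (x ⊔ y) → P x ∨ P y) :
    ∀ {s : Finset α}, ∀ (hs : s.Nonempty) (f : α → L), P (s.sup' hs f) → ∃ a ∈ s, P (f a) := by
  intro s
  induction s using Finset.cons_induction with
  | empty => intro hs; exact absurd hs (by simp)
  | cons a s ha ih =>
    intro hne f h
    rcases s.eq_empty_or_nonempty with rfl | hs
    · exact ⟨a, by simp, by simpa using h⟩
    · rw [Finset.sup'_cons hs] at h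
      rcases hor _ _ h with h | h
      · exact ⟨a, by simp, h⟩
      · obtain ⟨b, hb, hPb⟩ := ih hs f h
        exact ⟨b, by simp [hb], hPb⟩

lemma P_inf'_of_forall {α : Type*} {P : L → Prop}
    (hand : ∀ x y : L, P x → P y → P (x ⊓ y)) :
    ∀ {s : Finset α}, ∀ (hs : s.Nonempty) (f : α → L), (∀ a ∈ s, P (f a)) → P (s.inf' hs f) := by
  intro s
  induction s using Finset.cons_induction with
  | empty => intro hs; exact absurd hs (by simp)
  | cons a s ha ih =>
    intro hne f h
    rcases s.eq_empty_or_nonempty with rfl | hs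
    · simpa using h a (by simp)
    · rw [Finset.inf'_cons hs]
      exact hand _ _ (h a (by simp)) (ih hs f (fun b hb => h b (by simp [hb])))

/-- If `a ≰ b` in a distributive lattice, there is a "prime filter predicate" `P`
with `P a`, `¬ P b`. -/
lemma exists_primePred {a b : L} (hab : ¬ a ≤ b) :
    ∃ P : L → Prop, P a ∧ ¬ P b ∧ (∀ x y : L, x ≤ y → P x → P y) ∧
      (∀ x y : L, P x → P y → P (x ⊓ y)) ∧ (∀ x y : L, P (x ⊔ y) → P x ∨ P y) := by
  classical
  set L' := WithBot (WithTop L)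
  let i : L → L' := fun x => ((x : WithTop L) : L')
  have hi_le : ∀ x y : L, i x ≤ i y ↔ x ≤ y := by
    intro x y
    show ((x : WithTop L) : L') ≤ ((y : WithTop L) : L') ↔ x ≤ y
    exact ⟨fun h => by exact_mod_cast h, fun h => by exact_mod_cast h⟩
  have hi_sup : ∀ x y : L, i (x ⊔ y) = i x ⊔ i y := by
    intro x y
    simp [i, WithTop.coe_sup, WithBot.coe_sup]
  have hi_inf : ∀ x y : L, i (x ⊓ y) = i x ⊓ i y := by
    intro x y
    simp [i, WithTop.coe_inf, WithBot.coe_inf]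
  have hdisj : Disjoint (↑(Order.PFilter.principal (i a)) : Set L')
      (↑(Order.Ideal.principal (i b)) : Set L') := by
    rw [Set.disjoint_left]
    intro x hx hx'
    rw [SetLike.mem_coe, Order.PFilter.mem_principal] at hx
    rw [SetLike.mem_coe, Order.Ideal.mem_principal] at hx'
    exact hab ((hi_le a b).1 (le_trans hx hx'))
  obtain ⟨J, hJprime, hIJ, hJdisj⟩ :=
    DistribLattice.prime_ideal_of_disjoint_filter_ideal hdisj
  refine ⟨fun x => i x ∉ J, ?_, ?_, ?_, ?_, ?_⟩
  · exact Set.disjoint_left.1 hJdisj (Order.PFilter.mem_principal.2 le_rfl)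
  · intro h
    exact h (hIJ (Order.Ideal.mem_principal.2 le_rfl))
  · intro x y hxy hx hy
    exact hx (J.lower ((hi_le x y).2 hxy) hy)
  · intro x y hx hy h
    rw [hi_inf] at h
    rcases hJprime.mem_or_mem h with h | h
    · exact hx h
    · exact hy h
  · intro x y h
    by_contra hc
    push_neg at hc
    obtain ⟨hx, hy⟩ := hc
    exact h (hi_sup x y ▸ J.sup_mem hx hy)

end Prime

section Final
variable {V L : Type*} [Fintype V] [DistribLattice L] {E : V → V → Prop} {s t : V}

lemma cutMeet_le_pathSup (hG : IsFlowNetwork E s t) (c : V → V → L)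
    (hP : (pathFinset E s t).Nonempty) :
    (cutFinset s t).inf' (cutFinset_nonempty hG.ne) (fun S => cutJoin E c (c s t) S) ≤
      (pathFinset E s t).sup' hP (fun p => pathMeet c (c s t) p.1) := by
  by_contra hle
  obtain ⟨P, hPM, hPF, hup, hand, hor⟩ := exists_primePred hle
  -- every cut has a crossing edge whose capacity satisfies `P`
  have hcut : ∀ S ∈ cutFinset s t, ∃ e ∈ crossEdges E S, P (c e.1 e.2) := by
    intro S hS
    have h1 : P (cutJoin E c (c s t) S) :=
      hup _ _ (Finset.inf'_le _ hS) hPM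
    have hcross := crossEdges_nonempty hG hP hS
    rw [cutJoin, joinOver_eq hcross] at h1
    exact exists_mem_of_P_sup' hor hcross _ h1
  -- the set of vertices reachable from `s` along `P`-edges
  set D : V → V → Prop := fun a b => E a b ∧ P (c a b) with hD
  set R : Finset V := Finset.univ.filter (fun v => Relation.ReflTransGen D s v) with hR
  have hsR : s ∈ R := by
    simp only [hR, Finset.mem_filter, Finset.mem_univ, true_and]
    exact Relation.ReflTransGen.refl
  have htR : t ∈ R := by
    by_contra htR
    have hRcut : R ∈ cutFinset s t := by
      simp only [cutFinset, Finset.mem_filter, Finset.mem_univ, true_and]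
      exact ⟨hsR, htR⟩
    obtain ⟨e, he, hPe⟩ := hcut R hRcut
    simp only [crossEdges, Finset.mem_filter, Finset.mem_univ, true_and] at he
    obtain ⟨hE12, h1R, h2R⟩ := he
    apply h2R
    simp only [hR, Finset.mem_filter, Finset.mem_univ, true_and] at h1R ⊢
    exact h1R.tail ⟨hE12, hPe⟩
  -- extract a path with all capacities in `P`
  have hreach : Relation.ReflTransGen D s t := by
    simpa [hR] using htR
  obtain ⟨l, hlc, hlh, hll⟩ := exists_chain_of_reflTransGen hreach
  have hlcE : l.Chain' E := hlc.imp (fun _ _ h => h.1)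
  have hnodup : l.Nodup := chain'_nodup hG.acyclic hlcE
  have hmem : (⟨l, hnodup⟩ : {l : List V // l.Nodup}) ∈ pathFinset E s t := by
    simp only [pathFinset, Finset.mem_filter, Finset.mem_univ, true_and]
    exact ⟨hlcE, hlh, hll, hnodup⟩
  have hstp : IsSTPath E s t l := ⟨hlcE, hlh, hll, hnodup⟩
  obtain ⟨b, l', hbl⟩ := isSTPath_shape hG hstp
  have hpe : (pathEdges l).toFinset.Nonempty := by
    refine ⟨(s, b), List.mem_toFinset.2 ?_⟩
    rw [hbl, pathEdges_cons₂]
    exact List.mem_cons_self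
  have hPm : P (pathMeet c (c s t) l) := by
    rw [pathMeet, meetOver_eq hpe]
    refine P_inf'_of_forall hand hpe _ ?_
    intro e he
    rw [List.mem_toFinset] at he
    have : D e.1 e.2 := chain'_pair hlc he
    exact this.2
  have hF : P ((pathFinset E s t).sup' hP (fun p => pathMeet c (c s t) p.1)) :=
    hup _ _ (Finset.le_sup' (f := fun p : {l : List V // l.Nodup} => pathMeet c (c s t) p.1)
      hmem) hPm
  exact hPF hF

end Final

/-- **Lattice-valued bottleneck max-flow min-cut (cut form).** In a flow network with
capacities in a distributive lattice and at least one `s`–`t` path, the meet over all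
`s`–`t` cuts of the cut capacities is the least upper bound of the set of values of
`L`-valued flows. -/
theorem cutMeet_isLUB_flowValues {V L : Type*} [Fintype V] [DistribLattice L]
    (E : V → V → Prop) (s t : V) (hG : IsFlowNetwork E s t) (c : V → V → L)
    (hP : (pathFinset E s t).Nonempty) :
    IsLUB {x : L | ∃ φ : V → V → L, IsLFlow E s t c φ ∧ x = flowVal E s t φ}
      ((cutFinset s t).inf' (cutFinset_nonempty hG.ne) (fun S => cutJoin E c (c s t) S)) := by
  constructor
  · rintro x ⟨φ, hφ, rfl⟩
    apply Finset.le_inf'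
    intro S hS
    exact flowVal_le_cutJoin hG hP hφ hS
  · intro x hx
    refine le_trans (cutMeet_le_pathSup hG c hP) ?_
    rw [← maxFlow_val hG c hP]
    exact hx ⟨maxFlow E s t c, maxFlow_isFlow hG c, rfl⟩
end

section
/- Let (G, s, t) be a flow network with at least one s–t path and let c : E → L be a capacity function into a distributive lattice L. Then the element ⋁_{P∈𝒫} ⋀_{e∈P} c(e), the join over all s–t paths of the path bottleneck values, is the least upper bound of the set {val(φ) : φ is an L-valued flow on G}. -/
open Classical

set_option linter.unusedSectionVars false

namespace MFMC

open Relation List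

variable {V : Type*} {L : Type*}

lemma pathEdges_length (p : List V) : (pathEdges p).length = p.length - 1 := by
  simp only [pathEdges, List.length_zip, List.length_tail]
  omega

lemma pathEdges_getElem (p : List V) (i : ℕ) (h : i < (pathEdges p).length) :
    (pathEdges p)[i] =
      (p[i]'(by rw [pathEdges_length] at h; omega),
       p[i+1]'(by rw [pathEdges_length] at h; omega)) := by
  simp [pathEdges, List.getElem_zip, List.getElem_tail]

lemma mem_pathEdges_iff {p : List V} {e : V × V} :
    e ∈ pathEdges p ↔ ∃ i : ℕ, ∃ h : i + 1 < p.length,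
      e = (p[i]'(by omega), p[i+1]'h) := by
  rw [List.mem_iff_getElem]
  constructor
  · rintro ⟨i, h, rfl⟩
    have h' := h; rw [pathEdges_length] at h'
    exact ⟨i, by omega, by rw [pathEdges_getElem]⟩
  · rintro ⟨i, h, rfl⟩
    exact ⟨i, by rw [pathEdges_length]; omega, pathEdges_getElem p i _⟩

lemma chain'_rel {R : V → V → Prop} {p : List V} (h : p.Chain' R) {i : ℕ}
    (hi : i + 1 < p.length) : R (p[i]'(by omega)) (p[i+1]'hi) := by
  have := List.isChain_iff_getElem.1 h i (by omega)
  simpa [List.get_eq_getElem] using this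

lemma pathEdges_rel {R : V → V → Prop} {p : List V} (h : p.Chain' R) {e : V × V}
    (he : e ∈ pathEdges p) : R e.1 e.2 := by
  obtain ⟨i, hi, rfl⟩ := mem_pathEdges_iff.1 he
  exact chain'_rel h hi

lemma chain'_transGen {R : V → V → Prop} {p : List V} (h : p.Chain' R) :
    ∀ {i j : ℕ} (_ : i < j) (hj : j < p.length),
      Relation.TransGen R (p[i]'(by omega)) (p[j]'hj) := by
  intro i j hij hj
  induction j with
  | zero => omega
  | succ k ih =>
    rcases Nat.lt_succ_iff_lt_or_eq.1 hij with h' | h'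
    · exact (ih h' (by omega)).tail (chain'_rel h hj)
    · subst h'; exact .single (chain'_rel h hj)

lemma nodup_of_chain' {R : V → V → Prop} (hacyc : ∀ v : V, ¬ Relation.TransGen R v v)
    {p : List V} (h : p.Chain' R) : p.Nodup := by
  have key : ∀ i j (hlt : i < j) (hj : j < p.length), p[i]'(by omega) ≠ p[j]'hj := by
    intro i j hlt hj heq
    exact hacyc _ (heq ▸ chain'_transGen h hlt hj)
  rw [List.nodup_iff_injective_get]
  rintro ⟨i, hi⟩ ⟨j, hj⟩ hij
  simp only [List.get_eq_getElem] at hij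
  by_contra hne
  have hne' : i ≠ j := fun hh => hne (by simp [hh])
  rcases hne'.lt_or_gt with h' | h'
  · exact absurd hij (key i j h' hj)
  · exact absurd hij.symm (key j i h' hi)

lemma exists_path_of_rtg {R : V → V → Prop} (hacyc : ∀ v : V, ¬ Relation.TransGen R v v)
    {a b : V} (h : Relation.ReflTransGen R a b) :
    ∃ p : List V, p.Chain' R ∧ p.head? = some a ∧ p.getLast? = some b ∧ p.Nodup := by
  obtain ⟨l, hl, hlast⟩ := List.exists_isChain_cons_of_relationReflTransGen h
  have hch : (a :: l).Chain' R := hl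
  refine ⟨a :: l, hch, rfl, ?_, nodup_of_chain' hacyc hch⟩
  rw [List.getLast?_eq_getLast (List.cons_ne_nil a l), hlast]

lemma head_eq {p : List V} {v : V} (h : p.head? = some v) (h0 : 0 < p.length) :
    p[0]'h0 = v := by
  cases p with
  | nil => simp at h0
  | cons a r => simp at h ⊢; exact h

lemma last_eq {p : List V} {v : V} (h : p.getLast? = some v) (h0 : 0 < p.length) :
    p[p.length - 1]'(by omega) = v := by
  have hne : p ≠ [] := by intro hh; subst hh; simp at h0
  rw [List.getLast?_eq_getLast hne] at h
  rw [← List.getLast_eq_getElem hne]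
  exact Option.some_injective _ h

lemma exists_edge_into {p : List V} {s v : V} (hh : p.head? = some s) (hv : v ∈ p)
    (hvs : v ≠ s) : ∃ u, (u, v) ∈ pathEdges p := by
  obtain ⟨i, hi, hpv⟩ := List.mem_iff_getElem.1 hv
  subst hpv
  have h0 : i ≠ 0 := by rintro rfl; exact hvs (head_eq hh (by omega))
  have hi1 : i - 1 + 1 = i := by omega
  refine ⟨p[i-1]'(by omega), mem_pathEdges_iff.2 ⟨i-1, by omega, ?_⟩⟩
  simp only [hi1]

lemma exists_edge_outof {p : List V} {t v : V} (hl : p.getLast? = some t) (hv : v ∈ p)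
    (hvt : v ≠ t) : ∃ w, (v, w) ∈ pathEdges p := by
  obtain ⟨i, hi, hpv⟩ := List.mem_iff_getElem.1 hv
  subst hpv
  have h0 : i ≠ p.length - 1 := by
    rintro rfl; exact hvt (last_eq hl (by omega))
  exact ⟨p[i+1]'(by omega), mem_pathEdges_iff.2 ⟨i, by omega, rfl⟩⟩

lemma snd_mem_of_mem_pathEdges {p : List V} {e : V × V} (he : e ∈ pathEdges p) :
    e.2 ∈ p := by
  obtain ⟨i, hi, rfl⟩ := mem_pathEdges_iff.1 he
  exact List.getElem_mem _

lemma fst_mem_of_mem_pathEdges {p : List V} {e : V × V} (he : e ∈ pathEdges p) :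
    e.1 ∈ p := by
  obtain ⟨i, hi, rfl⟩ := mem_pathEdges_iff.1 he
  exact List.getElem_mem _

end MFMC
namespace MFMC

variable {V : Type*} {L : Type*} [Lattice L]

lemma pathEdges_toFinset_nonempty {p : List V} (h2 : 2 ≤ p.length) :
    (pathEdges p).toFinset.Nonempty := by
  have h : 0 < (pathEdges p).length := by rw [pathEdges_length]; omega
  exact ⟨(pathEdges p)[0], List.mem_toFinset.2 (List.getElem_mem h)⟩

lemma pathMeet_le {c : V → V → L} {p : List V} {e : V × V} (he : e ∈ pathEdges p)
    (j : L) : pathMeet c j p ≤ c e.1 e.2 := by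
  unfold pathMeet meetOver
  rw [dif_pos ⟨e, List.mem_toFinset.2 he⟩]
  exact Finset.inf'_le _ (List.mem_toFinset.2 he)

lemma pathMeet_mono {f g : V → V → L} {p : List V} (h2 : 2 ≤ p.length)
    (hfg : ∀ e ∈ pathEdges p, f e.1 e.2 ≤ g e.1 e.2) (j j' : L) :
    pathMeet f j p ≤ pathMeet g j' p := by
  unfold pathMeet meetOver
  rw [dif_pos (pathEdges_toFinset_nonempty h2), dif_pos (pathEdges_toFinset_nonempty h2)]
  exact Finset.le_inf' _ _ (fun e he =>
    (Finset.inf'_le _ he).trans (le_of_eq rfl) |>.trans (hfg e (List.mem_toFinset.1 he)))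

lemma pathMeet_pair {f : V → V → L} (j : L) (v w : V) :
    pathMeet f j [v, w] = f v w := by
  have : pathEdges [v, w] = [(v, w)] := rfl
  unfold pathMeet meetOver
  rw [this]
  simp

lemma pathMeet_cons {f : V → V → L} {j : L} {v w : V} {q : List V}
    (hq : q.head? = some w) (h2 : 2 ≤ q.length) :
    pathMeet f j (v :: q) = f v w ⊓ pathMeet f j q := by
  cases q with
  | nil => simp at h2
  | cons a r =>
    obtain rfl : w = a := by simpa using hq.symm
    have hpe : pathEdges (v :: w :: r) = (v, w) :: pathEdges (w :: r) := rfl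
    have hne : (pathEdges (w :: r)).toFinset.Nonempty := pathEdges_toFinset_nonempty h2
    unfold pathMeet meetOver
    rw [hpe]
    rw [List.toFinset_cons, dif_pos (Finset.insert_nonempty _ _), dif_pos hne,
      Finset.inf'_insert]

end MFMC
namespace MFMC

open Relation

variable {V : Type*} {L : Type*} [Fintype V] [DistribLattice L] {E : V → V → Prop} {s t : V}

lemma mem_pathFinset {a b : V} {p : {l : List V // l.Nodup}} :
    p ∈ pathFinset E a b ↔ IsSTPath E a b p.1 := by
  simp [pathFinset]

lemma IsSTPath.two_le_length {a b : V} {p : List V} (h : IsSTPath E a b p)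
    (hab : a ≠ b) : 2 ≤ p.length := by
  obtain ⟨h1, h2, h3, h4⟩ := h
  match p with
  | [] => simp at h2
  | [x] =>
    simp only [List.head?_cons, Option.some.injEq] at h2
    simp only [List.getLast?_singleton, Option.some.injEq] at h3
    exact absurd (h2.symm.trans h3) hab
  | x :: y :: r => simp

lemma head_mem {p : List V} {a : V} (h : p.head? = some a) : a ∈ p := by
  cases p with
  | nil => simp at h
  | cons x r => simp at h; simp [h]

lemma getLast?_cons_of_ne_nil {l : List V} (h : l ≠ []) (a : V) :
    (a :: l).getLast? = l.getLast? := by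
  cases l with
  | nil => exact absurd rfl h
  | cons b m => simp

lemma vtPaths_nonempty (hG : IsFlowNetwork E s t) {v : V}
    (hrtg : Relation.ReflTransGen E v t) : (pathFinset E v t).Nonempty := by
  obtain ⟨p, hc, hh, hl, hnd⟩ := exists_path_of_rtg hG.acyclic hrtg
  exact ⟨⟨p, hnd⟩, mem_pathFinset.2 ⟨hc, hh, hl, hnd⟩⟩

lemma le_joinOver {f : V → V → L} {S : Finset (V × V)} {e : V × V} (he : e ∈ S) (j : L) :
    f e.1 e.2 ≤ joinOver f S j := by
  unfold joinOver
  rw [dif_pos ⟨e, he⟩]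
  exact Finset.le_sup' (fun e : V × V => f e.1 e.2) he

lemma joinOver_le {f : V → V → L} {S : Finset (V × V)} {j x : L} (hne : S.Nonempty)
    (h : ∀ e ∈ S, f e.1 e.2 ≤ x) : joinOver f S j ≤ x := by
  unfold joinOver
  rw [dif_pos hne]
  exact Finset.sup'_le _ _ (fun e he => h e he)

lemma wf_flip (hacyc : ∀ v : V, ¬ Relation.TransGen E v v) :
    WellFounded (fun a b : V => E b a) := by
  have h1 : IsTrans V (fun a b => Relation.TransGen E b a) :=
    ⟨fun a b c h1 h2 => h2.trans h1⟩
  have h2 : IsIrrefl V (fun a b => Relation.TransGen E b a) := ⟨fun a h => hacyc a h⟩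
  exact Subrelation.wf (fun {a b} h => Relation.TransGen.single h)
    (Finite.wellFounded_of_trans_of_irrefl (fun a b : V => Relation.TransGen E b a))

lemma ub_aux (hG : IsFlowNetwork E s t) {φ : V → V → L} (j : L)
    (hcons : ∀ v, v ≠ s → v ≠ t →
      joinOver φ (edgesInto E v) (φ s t) = joinOver φ (edgesOutOf E v) (φ s t)) :
    ∀ v w, E v w → ∀ (hne : (pathFinset E v t).Nonempty),
      φ v w ≤ (pathFinset E v t).sup' hne (fun p => pathMeet φ j p.1) := by
  intro v
  induction v using (wf_flip hG.acyclic).induction with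
  | _ v IH =>
  intro w hvw hne
  have hvt : v ≠ t := fun h => hG.sink_in w (h ▸ hvw)
  have hws : w ≠ s := fun h => hG.source_out v (h ▸ hvw)
  by_cases hwt : w = t
  · rw [hwt] at hvw ⊢
    have hmem : (⟨[v, t], by simp [hvt]⟩ : {l : List V // l.Nodup}) ∈ pathFinset E v t := by
      refine mem_pathFinset.2 ⟨?_, rfl, rfl, by simp [hvt]⟩
      exact List.isChain_pair.2 hvw
    have h := Finset.le_sup' (fun p : {l : List V // l.Nodup} => pathMeet φ j p.1) hmem
    simpa [pathMeet_pair] using h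
  · have hq : (pathFinset E w t).Nonempty :=
      vtPaths_nonempty hG (hG.conn_sink w hws hwt)
    have hout : (edgesOutOf E w).Nonempty := by
      rcases (hG.conn_sink w hws hwt).cases_head with h | ⟨c', hc', _⟩
      · exact absurd h hwt
      · exact ⟨(w, c'), by simp [edgesOutOf, hc']⟩
    have h1 : φ v w ≤ joinOver φ (edgesInto E w) (φ s t) :=
      le_joinOver (e := (v, w)) (by simp [edgesInto, hvw]) _
    rw [hcons w hws hwt] at h1
    have h2 : joinOver φ (edgesOutOf E w) (φ s t) ≤
        (pathFinset E w t).sup' hq (fun p => pathMeet φ j p.1) := by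
      refine joinOver_le hout ?_
      rintro ⟨a, b⟩ he
      simp only [edgesOutOf, Finset.mem_filter, Finset.mem_univ, true_and] at he
      obtain ⟨hab, rfl⟩ := he
      exact IH _ hvw _ hab hq
    have h3 : φ v w ≤ (pathFinset E w t).sup' hq (fun p => pathMeet φ j p.1) := h1.trans h2
    rw [← inf_eq_left.2 h3, Finset.sup'_inf_distrib_left]
    refine Finset.sup'_le _ _ ?_
    intro q hqmem
    obtain ⟨hc, hh, hl, hnd⟩ := mem_pathFinset.1 hqmem
    have h2len : 2 ≤ q.1.length := IsSTPath.two_le_length ⟨hc, hh, hl, hnd⟩ hwt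
    have hvnot : v ∉ q.1 := by
      intro hvq
      obtain ⟨i, hi, hpv⟩ := List.mem_iff_getElem.1 hvq
      rcases Nat.eq_zero_or_pos i with rfl | hpos
      · rw [head_eq hh hi] at hpv
        rw [← hpv] at hvw
        exact hG.no_self_loop _ hvw
      · have htg := chain'_transGen hc hpos hi
        rw [head_eq hh (by omega), hpv] at htg
        exact hG.acyclic v (htg.head hvw)
    have hmem2 : (⟨v :: q.1, List.nodup_cons.2 ⟨hvnot, q.2⟩⟩ : {l : List V // l.Nodup}) ∈
        pathFinset E v t := by
      refine mem_pathFinset.2 ⟨?_, rfl, ?_, List.nodup_cons.2 ⟨hvnot, q.2⟩⟩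
      · apply List.isChain_cons.2
        refine ⟨fun y hy => ?_, hc⟩
        rw [hh] at hy
        obtain rfl : w = y := by simpa using hy
        exact hvw
      · rw [getLast?_cons_of_ne_nil (by intro hq0; rw [hq0] at h2len; simp at h2len) v]
        exact hl
    have h := Finset.le_sup' (fun p : {l : List V // l.Nodup} => pathMeet φ j p.1) hmem2
    rw [show pathMeet φ j (v :: q.1) = φ v w ⊓ pathMeet φ j q.1 from
      pathMeet_cons hh h2len] at h
    exact h

end MFMC
namespace MFMC

open Relation

variable {V L : Type*} [Fintype V] [DistribLattice L] {E : V → V → Prop} {s t : V}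

lemma edgesOutOf_source_nonempty (hG : IsFlowNetwork E s t)
    (hP : (pathFinset E s t).Nonempty) : (edgesOutOf E s).Nonempty := by
  obtain ⟨p, hp⟩ := hP
  obtain ⟨hc, hh, hl, hnd⟩ := mem_pathFinset.1 hp
  have h2 : 2 ≤ p.1.length := IsSTPath.two_le_length ⟨hc, hh, hl, hnd⟩ hG.ne
  have hE : E (p.1[0]'(by omega)) (p.1[1]'(by omega)) := chain'_rel hc (by omega)
  rw [head_eq hh (by omega)] at hE
  exact ⟨(s, p.1[1]'(by omega)), by simp [edgesOutOf, hE]⟩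

/-- Upper bound part. -/
lemma flowVal_le (hG : IsFlowNetwork E s t) {c φ : V → V → L} (hφ : IsLFlow E s t c φ)
    (hP : (pathFinset E s t).Nonempty) :
    flowVal E s t φ ≤ (pathFinset E s t).sup' hP (fun p => pathMeet c (c s t) p.1) := by
  obtain ⟨hcap, hcons⟩ := hφ
  have hub := ub_aux (j := c s t) hG hcons
  unfold flowVal
  refine joinOver_le (edgesOutOf_source_nonempty hG hP) ?_
  rintro ⟨a, b⟩ he
  simp only [edgesOutOf, Finset.mem_filter, Finset.mem_univ, true_and] at he
  obtain ⟨hab, rfl⟩ := he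
  refine (hub _ _ hab hP).trans ?_
  refine Finset.sup'_le _ _ ?_
  intro p hp
  obtain ⟨hc', hh, hl, hnd⟩ := mem_pathFinset.1 hp
  exact le_trans
    (pathMeet_mono (IsSTPath.two_le_length ⟨hc', hh, hl, hnd⟩ hG.ne)
      (fun e hepe => hcap e.1 e.2 (pathEdges_rel hc' hepe)) _ _)
    (Finset.le_sup' (fun p : {l : List V // l.Nodup} => pathMeet c (c a t) p.1) hp)

/-- The paths through a given (potential) edge. -/
noncomputable def edgePaths (E : V → V → Prop) (s t : V) (u v : V) :
    Finset {l : List V // l.Nodup} :=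
  (pathFinset E s t).filter (fun p => (u, v) ∈ pathEdges p.1)

/-- The maximal flow. -/
noncomputable def maxFlow (E : V → V → Prop) (s t : V) (c : V → V → L) (u v : V) : L :=
  if h : (edgePaths E s t u v).Nonempty
  then (edgePaths E s t u v).sup' h (fun p => pathMeet c (c s t) p.1) else c u v

lemma edgePaths_nonempty (hG : IsFlowNetwork E s t) {u v : V} (he : E u v) :
    (edgePaths E s t u v).Nonempty := by
  have hut : u ≠ t := fun h => hG.sink_in v (h ▸ he)
  have hvs : v ≠ s := fun h => hG.source_out u (h ▸ he)
  have h1 : Relation.ReflTransGen E s u := by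
    by_cases hus : u = s
    · rw [hus]
    · exact hG.conn_source u hus hut
  have h2 : Relation.ReflTransGen E v t := by
    by_cases hvt : v = t
    · rw [← hvt]
    · exact hG.conn_sink v hvs hvt
  obtain ⟨l1, hc1, hh1, hl1, _⟩ := exists_path_of_rtg hG.acyclic h1
  obtain ⟨l2, hc2, hh2, hl2, _⟩ := exists_path_of_rtg hG.acyclic h2
  have hne1 : l1 ≠ [] := by rintro rfl; simp at hh1
  have hne2 : l2 ≠ [] := by rintro rfl; simp at hh2
  have hlen1 : 0 < l1.length := List.length_pos_iff.2 hne1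
  have hlen2 : 0 < l2.length := List.length_pos_iff.2 hne2
  have hchain : (l1 ++ l2).Chain' E := by
    refine List.IsChain.append hc1 hc2 ?_
    intro x hx y hy
    rw [Option.mem_def] at hx hy
    rw [hl1] at hx
    rw [hh2] at hy
    obtain rfl : x = u := (Option.some_inj.1 hx).symm
    obtain rfl : y = v := (Option.some_inj.1 hy).symm
    exact he
  refine ⟨⟨l1 ++ l2, nodup_of_chain' hG.acyclic hchain⟩, ?_⟩
  rw [edgePaths, Finset.mem_filter]
  refine ⟨mem_pathFinset.2 ⟨hchain, ?_, ?_, nodup_of_chain' hG.acyclic hchain⟩, ?_⟩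
  · rw [List.head?_append, hh1]
    rfl
  · rw [List.getLast?_append_of_ne_nil l1 hne2]
    exact hl2
  · refine mem_pathEdges_iff.2 ⟨l1.length - 1, by simp; omega, ?_⟩
    have hidx : l1.length - 1 + 1 = l1.length := by omega
    have e1 : (l1 ++ l2)[l1.length - 1]'(by simp; omega) = u := by
      rw [List.getElem_append_left (by omega)]
      exact last_eq hl1 hlen1
    have e2 : (l1 ++ l2)[l1.length - 1 + 1]'(by simp; omega) = v := by
      simp only [hidx]
      rw [List.getElem_append_right (le_refl _)]
      simpa using head_eq hh2 hlen2
    rw [e1, e2]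

lemma maxFlow_le_c (c : V → V → L) (u v : V) : maxFlow E s t c u v ≤ c u v := by
  unfold maxFlow
  split_ifs with h
  · refine Finset.sup'_le _ _ ?_
    intro p hp
    rw [edgePaths, Finset.mem_filter] at hp
    exact pathMeet_le hp.2 _
  · exact le_refl _

lemma pathMeet_le_joinOut (hG : IsFlowNetwork E s t) (c : V → V → L) {v : V}
    (hvt : v ≠ t) {p : {l : List V // l.Nodup}} (hpmem : p ∈ pathFinset E s t)
    (hvp : v ∈ p.1) (J : L) :
    pathMeet c (c s t) p.1 ≤ joinOver (maxFlow E s t c) (edgesOutOf E v) J := by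
  obtain ⟨hc', hh, hl, hnd⟩ := mem_pathFinset.1 hpmem
  obtain ⟨w, hw⟩ := exists_edge_outof hl hvp hvt
  have hEvw : E v w := pathEdges_rel hc' hw
  have h1 : pathMeet c (c s t) p.1 ≤ maxFlow E s t c v w := by
    rw [maxFlow, dif_pos (edgePaths_nonempty hG hEvw)]
    exact Finset.le_sup' (fun p : {l : List V // l.Nodup} => pathMeet c (c s t) p.1)
      (Finset.mem_filter.2 ⟨hpmem, hw⟩)
  exact h1.trans (le_joinOver (e := (v, w)) (by simp [edgesOutOf, hEvw]) J)

lemma pathMeet_le_joinIn (hG : IsFlowNetwork E s t) (c : V → V → L) {v : V}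
    (hvs : v ≠ s) {p : {l : List V // l.Nodup}} (hpmem : p ∈ pathFinset E s t)
    (hvp : v ∈ p.1) (J : L) :
    pathMeet c (c s t) p.1 ≤ joinOver (maxFlow E s t c) (edgesInto E v) J := by
  obtain ⟨hc', hh, hl, hnd⟩ := mem_pathFinset.1 hpmem
  obtain ⟨u, hu⟩ := exists_edge_into hh hvp hvs
  have hEuv : E u v := pathEdges_rel hc' hu
  have h1 : pathMeet c (c s t) p.1 ≤ maxFlow E s t c u v := by
    rw [maxFlow, dif_pos (edgePaths_nonempty hG hEuv)]
    exact Finset.le_sup' (fun p : {l : List V // l.Nodup} => pathMeet c (c s t) p.1)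
      (Finset.mem_filter.2 ⟨hpmem, hu⟩)
  exact h1.trans (le_joinOver (e := (u, v)) (by simp [edgesInto, hEuv]) J)

lemma joinOut_le (hG : IsFlowNetwork E s t) (c : V → V → L) {v : V} {x : L}
    (hne : (edgesOutOf E v).Nonempty) (J : L)
    (h : ∀ p ∈ pathFinset E s t, v ∈ p.1 → pathMeet c (c s t) p.1 ≤ x) :
    joinOver (maxFlow E s t c) (edgesOutOf E v) J ≤ x := by
  refine joinOver_le hne ?_
  rintro ⟨a, b⟩ he
  simp only [edgesOutOf, Finset.mem_filter, Finset.mem_univ, true_and] at he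
  obtain ⟨hab, rfl⟩ := he
  rw [maxFlow, dif_pos (edgePaths_nonempty hG hab)]
  refine Finset.sup'_le _ _ ?_
  intro p hp
  rw [edgePaths, Finset.mem_filter] at hp
  exact h p hp.1 (fst_mem_of_mem_pathEdges hp.2)

lemma joinIn_le (hG : IsFlowNetwork E s t) (c : V → V → L) {v : V} {x : L}
    (hne : (edgesInto E v).Nonempty) (J : L)
    (h : ∀ p ∈ pathFinset E s t, v ∈ p.1 → pathMeet c (c s t) p.1 ≤ x) :
    joinOver (maxFlow E s t c) (edgesInto E v) J ≤ x := by
  refine joinOver_le hne ?_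
  rintro ⟨a, b⟩ he
  simp only [edgesInto, Finset.mem_filter, Finset.mem_univ, true_and] at he
  obtain ⟨hab, rfl⟩ := he
  rw [maxFlow, dif_pos (edgePaths_nonempty hG hab)]
  refine Finset.sup'_le _ _ ?_
  intro p hp
  rw [edgePaths, Finset.mem_filter] at hp
  exact h p hp.1 (snd_mem_of_mem_pathEdges hp.2)

lemma maxFlow_isFlow (hG : IsFlowNetwork E s t) (c : V → V → L) :
    IsLFlow E s t c (maxFlow E s t c) := by
  refine ⟨fun u v _ => maxFlow_le_c c u v, ?_⟩
  intro v hvs hvt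
  have hinE : (edgesInto E v).Nonempty := by
    rcases (hG.conn_source v hvs hvt).cases_tail with h | ⟨u, _, hu⟩
    · exact absurd h hvs
    · exact ⟨(u, v), by simp [edgesInto, hu]⟩
  have houtE : (edgesOutOf E v).Nonempty := by
    rcases (hG.conn_sink v hvs hvt).cases_head with h | ⟨w, hw, _⟩
    · exact absurd h hvt
    · exact ⟨(v, w), by simp [edgesOutOf, hw]⟩
  apply le_antisymm
  · exact joinIn_le hG c hinE _ (fun p hp hvp => pathMeet_le_joinOut hG c hvt hp hvp _)
  · exact joinOut_le hG c houtE _ (fun p hp hvp => pathMeet_le_joinIn hG c hvs hp hvp _)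

lemma flowVal_maxFlow (hG : IsFlowNetwork E s t) (c : V → V → L)
    (hP : (pathFinset E s t).Nonempty) :
    flowVal E s t (maxFlow E s t c) =
      (pathFinset E s t).sup' hP (fun p => pathMeet c (c s t) p.1) := by
  unfold flowVal
  apply le_antisymm
  · refine joinOut_le hG c (edgesOutOf_source_nonempty hG hP) _ ?_
    intro p hp _
    exact Finset.le_sup' (fun p : {l : List V // l.Nodup} => pathMeet c (c s t) p.1) hp
  · refine Finset.sup'_le _ _ ?_
    intro p hp
    exact pathMeet_le_joinOut hG c hG.ne hp (head_mem (mem_pathFinset.1 hp).2.1) _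

end MFMC

/-- **Lattice-valued bottleneck max-flow min-cut (path form).** In a flow network with
capacities in a distributive lattice and at least one `s`–`t` path, the join over all
`s`–`t` paths of the path bottleneck values is the least upper bound of the set of
values of `L`-valued flows. -/
theorem pathJoin_isLUB_flowValues {V L : Type*} [Fintype V] [DistribLattice L]
    (E : V → V → Prop) (s t : V) (hG : IsFlowNetwork E s t) (c : V → V → L)
    (hP : (pathFinset E s t).Nonempty) :
    IsLUB {x : L | ∃ φ : V → V → L, IsLFlow E s t c φ ∧ x = flowVal E s t φ}
      ((pathFinset E s t).sup' hP (fun p => pathMeet c (c s t) p.1)) := by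
  constructor
  · rintro x ⟨φ, hφ, rfl⟩
    exact MFMC.flowVal_le hG hφ hP
  · intro b hb
    have hval := MFMC.flowVal_maxFlow hG c hP
    exact hval ▸ hb ⟨_, MFMC.maxFlow_isFlow hG c, rfl⟩
end

section
/- Let G=(V,E) be a finite directed graph without self-loops, parallel edges, or directed cycles, with distinct vertices s,t ∈ V such that every edge incident to s is outgoing from s and every edge incident to t is incoming to t (dead-end vertices are allowed), and let c : E → L be a capacity function into a distributive lattice L having a least element ⊥. Then the element ⋀_{C∈𝒞} cap(C), the meet over all s–t cuts C of the cut capacities, is the least upper bound of the set {val(φ) : φ is an L-valued flow on G}, where empty joins are interpreted as ⊥. -/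
open Classical

/-- A source–target network possibly with dead ends: a finite digraph (edges given by
a relation, hence no parallel edges) without self-loops or directed cycles, with
distinct source `s` and sink `t`, all edges at `s` outgoing and all edges at `t`
incoming; no connectivity is assumed. -/
structure IsSTNetwork {V : Type*} (E : V → V → Prop) (s t : V) : Prop where
  no_self_loop : ∀ v, ¬ E v v
  acyclic : ∀ v, ¬ Relation.TransGen E v v
  ne : s ≠ t
  source_out : ∀ v, ¬ E v s
  sink_in : ∀ v, ¬ E t v

/-- An `L`-valued flow on a network possibly having dead ends, where `L` has a least
element `⊥` and empty joins are `⊥` (`Finset.sup`): `φ` respects the capacities, and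
at every vertex other than `s` and `t` the join of `φ` over incoming edges equals
the join over outgoing edges. -/
def IsLFlowBot {V L : Type*} [Fintype V] [Lattice L] [OrderBot L]
    (E : V → V → Prop) (s t : V) (c φ : V → V → L) : Prop :=
  (∀ u v, E u v → φ u v ≤ c u v) ∧
  (∀ v, v ≠ s → v ≠ t →
    (edgesInto E v).sup (fun e => φ e.1 e.2) = (edgesOutOf E v).sup (fun e => φ e.1 e.2))

/-- The value of a flow: the join of `φ` over the edges leaving the source `s`, equal
to `⊥` if `s` has no outgoing edges. -/
noncomputable def flowValBot {V L : Type*} [Fintype V] [Lattice L] [OrderBot L]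
    (E : V → V → Prop) (s : V) (φ : V → V → L) : L :=
  (edgesOutOf E s).sup (fun e => φ e.1 e.2)

section Aux

open Classical

variable {V L : Type*}

/-- meet distributes over `inf'` in any lattice. -/
lemma my_inf'_meet {ι : Type*} [Lattice L] (s : Finset ι) (h : s.Nonempty) (f : ι → L) (a : L) :
    a ⊓ s.inf' h f = s.inf' h (fun i => a ⊓ f i) := by
  apply le_antisymm
  · exact Finset.le_inf' _ _ fun i hi => inf_le_inf_left a (Finset.inf'_le f hi)
  · refine le_inf ?_ ?_
    · obtain ⟨i, hi⟩ := h
      exact (Finset.inf'_le _ hi).trans inf_le_left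
    · exact Finset.le_inf' _ _ fun i hi => (Finset.inf'_le _ hi).trans inf_le_right

/-- Finite distributivity, inequality form: an inf of sups is below `b` provided every
choice-function inf is below `b`. -/
lemma my_infSup_le {ι κ : Type*} [DistribLattice L] [OrderBot L]
    {s : Finset ι} (hs : s.Nonempty) :
    ∀ (f : ι → Finset κ) (g : κ → L) (b : L),
      (∀ sel : ι → κ, (∀ i ∈ s, sel i ∈ f i) → s.inf' hs (fun i => g (sel i)) ≤ b) →
      s.inf' hs (fun i => (f i).sup g) ≤ b := by
  classical
  induction hs using Finset.Nonempty.cons_induction with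
  | singleton a =>
    intro f g b hb
    rw [Finset.inf'_singleton]
    exact Finset.sup_le fun k hk => by
      simpa using hb (fun _ => k) (by simp [hk])
  | cons a s ha hs ih =>
    intro f g b hb
    rw [Finset.inf'_cons hs, Finset.sup_inf_distrib_right]
    apply Finset.sup_le
    intro k hk
    rw [my_inf'_meet]
    have hfun : ∀ i, g k ⊓ (f i).sup g = (f i).sup (fun j => g k ⊓ g j) := fun i =>
      Finset.sup_inf_distrib_left _ _ _
    simp only [hfun]
    apply ih f (fun j => g k ⊓ g j) b
    intro sel hsel
    rw [← my_inf'_meet]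
    have h2 := hb (Function.update sel a k) ?_
    · rw [Finset.inf'_cons hs] at h2
      rw [Function.update_self] at h2
      have heq : s.inf' hs (fun i => g (Function.update sel a k i)) =
          s.inf' hs (fun i => g (sel i)) := by
        apply Finset.inf'_congr _ rfl
        intro i hi
        rw [Function.update_of_ne (fun h : i = a => ha (h ▸ hi))]
      rwa [heq] at h2
    · intro i hi
      by_cases hia : i = a
      · subst hia
        simpa using hk
      · rw [Function.update_of_ne hia]
        exact hsel i ((Finset.mem_cons.1 hi).resolve_left hia)

/-- Along a `Chain'`, later entries are reachable from earlier ones. -/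
lemma my_chain'_transGen {E : V → V → Prop} {p : List V} (hp : p.Chain' E) :
    ∀ i j (hij : i < j) (hj : j < p.length),
      Relation.TransGen E (p[i]'(Nat.lt_trans hij hj)) p[j] := by
  intro i j
  induction j with
  | zero => intro hij _; omega
  | succ k ihk =>
    intro hij hj
    have hedge : E (p[k]'(by omega)) (p[k + 1]'hj) := by
      have := List.isChain_iff_getElem.1 hp k (by omega)
      simpa [List.get_eq_getElem] using this
    rcases Nat.lt_succ_iff_lt_or_eq.1 hij with h | h
    · exact (ihk h (by omega)).tail hedge
    · subst h
      exact Relation.TransGen.single hedge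

/-- In an acyclic digraph, every chain is nodup. -/
lemma my_nodup_of_chain' {E : V → V → Prop} (hac : ∀ v, ¬ Relation.TransGen E v v)
    {p : List V} (hp : p.Chain' E) : p.Nodup := by
  rw [List.nodup_iff_injective_get]
  intro a b hab
  by_contra hne
  rcases lt_or_gt_of_ne (fun h : a = b => hne h) with h | h
  · have := my_chain'_transGen hp a.1 b.1 h b.2
    rw [List.get_eq_getElem, List.get_eq_getElem] at hab
    rw [hab] at this
    exact hac _ this
  · have := my_chain'_transGen hp b.1 a.1 h a.2
    rw [List.get_eq_getElem, List.get_eq_getElem] at hab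
    rw [← hab] at this
    exact hac _ this

/-- Membership in `pathEdges` via indices. -/
lemma my_mem_pathEdges {p : List V} {a b : V} :
    (a, b) ∈ pathEdges p ↔ ∃ i, ∃ _ : i + 1 < p.length, p[i] = a ∧ p[i + 1] = b := by
  unfold pathEdges
  rw [List.mem_iff_getElem]
  constructor
  · rintro ⟨i, hi, hgi⟩
    have hlt : i + 1 < p.length := by
      rw [List.length_zip, List.length_tail] at hi
      omega
    have hz := List.getElem_zip (l := p) (l' := p.tail) (i := i) (h := hi)
    rw [hz] at hgi
    refine ⟨i, hlt, congrArg Prod.fst hgi, ?_⟩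
    have h2 := congrArg Prod.snd hgi
    simp only at h2
    rw [← h2, List.getElem_tail]
  · rintro ⟨i, hlt, ha, hb⟩
    have hi : i < (p.zip p.tail).length := by
      rw [List.length_zip, List.length_tail]
      omega
    refine ⟨i, hi, ?_⟩
    rw [List.getElem_zip, List.getElem_tail]
    exact Prod.ext ha hb

end Aux
section Aux2

open Classical

variable {V L : Type*}

lemma my_pathEdges_E {E : V → V → Prop} {p : List V} (hc : p.Chain' E) {a b : V}
    (h : (a, b) ∈ pathEdges p) : E a b := by
  obtain ⟨i, hi, ha, hb⟩ := my_mem_pathEdges.1 h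
  have := List.isChain_iff_getElem.1 hc i (by omega)
  rwa [ha, hb] at this

lemma my_head_getElem {p : List V} {s : V} (h : p.head? = some s) :
    ∃ _ : 0 < p.length, p[0] = s := by
  cases p with
  | nil => simp at h
  | cons a l =>
    simp only [List.head?_cons, Option.some.injEq] at h
    exact ⟨by simp, by simpa using h⟩

lemma my_last_getElem {p : List V} {t : V} (h : p.getLast? = some t) :
    ∃ _ : 0 < p.length, p[p.length - 1] = t := by
  have hpne : p ≠ [] := by rintro rfl; simp at h
  rw [List.getLast?_eq_getLast hpne, List.getLast_eq_getElem hpne] at h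
  exact ⟨List.length_pos_iff.2 hpne, Option.some_injective _ h⟩

lemma my_edge_out {E : V → V → Prop} {s t : V} {p : List V} (hp : IsSTPath E s t p)
    {v : V} (hv : v ∈ p) (hvt : v ≠ t) : ∃ w, E v w ∧ (v, w) ∈ pathEdges p := by
  obtain ⟨hchain, _hhead, hlast, _hnd⟩ := hp
  obtain ⟨i, hi, rfl⟩ := List.mem_iff_getElem.1 hv
  obtain ⟨hpos, hlastel⟩ := my_last_getElem hlast
  have hine : i ≠ p.length - 1 := by
    intro h
    apply hvt
    subst h
    exact hlastel
  have h1 : i + 1 < p.length := by omega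
  refine ⟨p[i + 1], ?_, my_mem_pathEdges.2 ⟨i, h1, rfl, rfl⟩⟩
  have := List.isChain_iff_getElem.1 hchain i (by omega)
  simpa [List.get_eq_getElem] using this

lemma my_edge_in {E : V → V → Prop} {s t : V} {p : List V} (hp : IsSTPath E s t p)
    {v : V} (hv : v ∈ p) (hvs : v ≠ s) : ∃ u, E u v ∧ (u, v) ∈ pathEdges p := by
  obtain ⟨hchain, hhead, _hlast, _hnd⟩ := hp
  obtain ⟨i, hi, rfl⟩ := List.mem_iff_getElem.1 hv
  obtain ⟨hpos, hheadel⟩ := my_head_getElem hhead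
  have hine : i ≠ 0 := by
    intro h
    apply hvs
    subst h
    exact hheadel
  have he : i - 1 + 1 = i := by omega
  refine ⟨p[i - 1], ?_, my_mem_pathEdges.2 ⟨i - 1, by omega, rfl, by simp [he]⟩⟩
  have := List.isChain_iff_getElem.1 hchain (i - 1) (by omega)
  simp only [List.get_eq_getElem, he] at this
  exact this

lemma my_pathMeet_le [Lattice L] (c : V → V → L) (j : L) {p : List V} {u v : V}
    (h : (u, v) ∈ pathEdges p) : pathMeet c j p ≤ c u v := by
  classical
  unfold pathMeet meetOver
  have hne : (pathEdges p).toFinset.Nonempty := ⟨(u, v), List.mem_toFinset.2 h⟩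
  rw [dif_pos hne]
  exact Finset.inf'_le _ (List.mem_toFinset.2 h)

lemma my_le_pathMeet [Lattice L] (c : V → V → L) (j : L) {p : List V} {a : L}
    (hne : pathEdges p ≠ []) (h : ∀ u v, (u, v) ∈ pathEdges p → a ≤ c u v) :
    a ≤ pathMeet c j p := by
  classical
  unfold pathMeet meetOver
  obtain ⟨x, hx⟩ := List.exists_mem_of_ne_nil _ hne
  have hne' : (pathEdges p).toFinset.Nonempty := ⟨x, List.mem_toFinset.2 hx⟩
  rw [dif_pos hne']
  apply Finset.le_inf'
  rintro ⟨u, v⟩ he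
  exact h u v (List.mem_toFinset.1 he)

end Aux2
section Net

open Classical

variable {V L : Type*} [Fintype V] [DistribLattice L] [OrderBot L]
variable (E : V → V → Prop) (s t : V) (c : V → V → L)

lemma my_mem_edgesInto {v : V} {e : V × V} : e ∈ edgesInto E v ↔ E e.1 e.2 ∧ e.2 = v := by
  simp [edgesInto]

lemma my_mem_edgesOutOf {v : V} {e : V × V} : e ∈ edgesOutOf E v ↔ E e.1 e.2 ∧ e.1 = v := by
  simp [edgesOutOf]

lemma my_mem_crossEdges {S : Finset V} {e : V × V} :
    e ∈ crossEdges E S ↔ E e.1 e.2 ∧ e.1 ∈ S ∧ e.2 ∉ S := by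
  simp [crossEdges]

lemma my_mem_cutFinset {S : Finset V} : S ∈ cutFinset s t ↔ s ∈ S ∧ t ∉ S := by
  simp [cutFinset]

lemma my_mem_pathFinset {p : {l : List V // l.Nodup}} :
    p ∈ pathFinset E s t ↔ IsSTPath E s t p.1 := by
  simp [pathFinset]

/-- The canonical path flow. -/
noncomputable def myPhi : V → V → L := fun u v =>
  ((pathFinset E s t).filter (fun p => (u, v) ∈ pathEdges p.1)).sup
    (fun p => pathMeet c ⊥ p.1)

lemma myPhi_le_cap (u v : V) : myPhi E s t c u v ≤ c u v := by
  simp only [myPhi]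
  apply Finset.sup_le
  intro p hp
  rw [Finset.mem_filter] at hp
  exact my_pathMeet_le c ⊥ hp.2

lemma le_myPhi {p : {l : List V // l.Nodup}} (hp : p ∈ pathFinset E s t) {u v : V}
    (h : (u, v) ∈ pathEdges p.1) : pathMeet c ⊥ p.1 ≤ myPhi E s t c u v := by
  simp only [myPhi]
  exact Finset.le_sup (f := fun p : {l : List V // l.Nodup} => pathMeet c ⊥ p.1)
    (Finset.mem_filter.2 ⟨hp, h⟩)

lemma myPhi_into {v : V} (hvs : v ≠ s) :
    (edgesInto E v).sup (fun e => myPhi E s t c e.1 e.2) =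
      ((pathFinset E s t).filter (fun p => v ∈ p.1)).sup (fun p => pathMeet c ⊥ p.1) := by
  apply le_antisymm
  · apply Finset.sup_le
    rintro ⟨a, w⟩ he
    obtain ⟨hE, hwv⟩ := (my_mem_edgesInto E).1 he
    simp only at hwv
    subst hwv
    simp only [myPhi]
    apply Finset.sup_le
    intro p hp
    rw [Finset.mem_filter] at hp
    obtain ⟨hpP, hpe⟩ := hp
    refine Finset.le_sup (f := fun p : {l : List V // l.Nodup} => pathMeet c ⊥ p.1)
      (Finset.mem_filter.2 ⟨hpP, ?_⟩)
    obtain ⟨i, hi, h1, h2⟩ := my_mem_pathEdges.1 hpe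
    rw [List.mem_iff_getElem]
    exact ⟨i + 1, hi, h2⟩
  · apply Finset.sup_le
    intro p hp
    rw [Finset.mem_filter] at hp
    obtain ⟨hpP, hvp⟩ := hp
    obtain ⟨u, hEuv, hmem⟩ := my_edge_in ((my_mem_pathFinset E s t).1 hpP) hvp hvs
    exact (le_myPhi E s t c hpP hmem).trans
      (Finset.le_sup (f := fun e : V × V => myPhi E s t c e.1 e.2)
        ((my_mem_edgesInto E (e := (u, v))).2 ⟨hEuv, rfl⟩))

lemma myPhi_outOf {v : V} (hvt : v ≠ t) :
    (edgesOutOf E v).sup (fun e => myPhi E s t c e.1 e.2) =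
      ((pathFinset E s t).filter (fun p => v ∈ p.1)).sup (fun p => pathMeet c ⊥ p.1) := by
  apply le_antisymm
  · apply Finset.sup_le
    rintro ⟨a, w⟩ he
    obtain ⟨hE, hav⟩ := (my_mem_edgesOutOf E).1 he
    simp only at hav
    subst hav
    simp only [myPhi]
    apply Finset.sup_le
    intro p hp
    rw [Finset.mem_filter] at hp
    obtain ⟨hpP, hpe⟩ := hp
    refine Finset.le_sup (f := fun p : {l : List V // l.Nodup} => pathMeet c ⊥ p.1)
      (Finset.mem_filter.2 ⟨hpP, ?_⟩)
    obtain ⟨i, hi, h1, h2⟩ := my_mem_pathEdges.1 hpe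
    rw [List.mem_iff_getElem]
    exact ⟨i, by omega, h1⟩
  · apply Finset.sup_le
    intro p hp
    rw [Finset.mem_filter] at hp
    obtain ⟨hpP, hvp⟩ := hp
    obtain ⟨w, hEvw, hmem⟩ := my_edge_out ((my_mem_pathFinset E s t).1 hpP) hvp hvt
    exact (le_myPhi E s t c hpP hmem).trans
      (Finset.le_sup (f := fun e : V × V => myPhi E s t c e.1 e.2)
        ((my_mem_edgesOutOf E (e := (v, w))).2 ⟨hEvw, rfl⟩))

lemma myPhi_isFlow (hst : s ≠ t) : IsLFlowBot E s t c (myPhi E s t c) := by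
  refine ⟨fun u v _ => myPhi_le_cap E s t c u v, fun v hvs hvt => ?_⟩
  rw [myPhi_into E s t c hvs, myPhi_outOf E s t c hvt]

lemma myPhi_val (hst : s ≠ t) :
    flowValBot E s (myPhi E s t c) =
      (pathFinset E s t).sup (fun p => pathMeet c ⊥ p.1) := by
  unfold flowValBot
  apply le_antisymm
  · apply Finset.sup_le
    intro e he
    simp only [myPhi]
    exact Finset.sup_mono (Finset.filter_subset _ _)
  · apply Finset.sup_le
    intro p hpP
    have hpath := (my_mem_pathFinset E s t).1 hpP
    have hsmem : s ∈ p.1 := by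
      obtain ⟨hpos, h0⟩ := my_head_getElem hpath.2.1
      rw [List.mem_iff_getElem]
      exact ⟨0, hpos, h0⟩
    obtain ⟨w, hEsw, hmem⟩ := my_edge_out hpath hsmem hst
    exact (le_myPhi E s t c hpP hmem).trans
      (Finset.le_sup (f := fun e : V × V => myPhi E s t c e.1 e.2)
        ((my_mem_edgesOutOf E (e := (s, w))).2 ⟨hEsw, rfl⟩))

end Net
/-- **Bottleneck max-flow min-cut with dead ends.** For a source–target network
(dead-end vertices allowed) with capacities in a distributive lattice with least
element `⊥`, empty joins being `⊥`, the meet over all `s`–`t` cuts of the cut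
capacities is the least upper bound of the set of values of `L`-valued flows. -/
theorem cutMeet_isLUB_flowValues_with_dead_ends {V L : Type*} [Fintype V]
    [DistribLattice L] [OrderBot L]
    (E : V → V → Prop) (s t : V) (hG : IsSTNetwork E s t) (c : V → V → L) :
    IsLUB {x : L | ∃ φ : V → V → L, IsLFlowBot E s t c φ ∧ x = flowValBot E s φ}
      ((cutFinset s t).inf' (cutFinset_nonempty hG.ne)
        (fun S => (crossEdges E S).sup (fun e => c e.1 e.2))) := by
  classical
  constructor
  · -- upper bound: every flow value is below every cut capacity
    rintro x ⟨φ₀, ⟨hcap, hcons⟩, rfl⟩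
    apply Finset.le_inf'
    intro S hS
    obtain ⟨hsS, htS⟩ := (my_mem_cutFinset s t).1 hS
    have hwf : WellFounded (fun a b : V => E b a) := by
      refine Subrelation.wf (r := Relation.TransGen (fun a b : V => E b a))
        (fun {a b} h => Relation.TransGen.single h) ?_
      refine @Finite.wellFounded_of_trans_of_irrefl _ _ _
        ⟨fun a b d hab hbd => hab.trans hbd⟩ ⟨fun a h => hG.acyclic a ?_⟩
      exact (Relation.transGen_swap (r := E)).1 h
    have key : ∀ v u, u ∈ S → E u v →
        φ₀ u v ≤ (crossEdges E S).sup (fun e => φ₀ e.1 e.2) := by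
      intro v
      induction v using hwf.induction with
      | _ v ih =>
        intro u hu huv
        by_cases hvS : v ∈ S
        · have hvt : v ≠ t := fun h => htS (h ▸ hvS)
          have hvs : v ≠ s := fun h => hG.source_out u (h ▸ huv)
          have h1 : φ₀ u v ≤ (edgesInto E v).sup (fun e => φ₀ e.1 e.2) :=
            Finset.le_sup (f := fun e : V × V => φ₀ e.1 e.2)
              ((my_mem_edgesInto E (e := (u, v))).2 ⟨huv, rfl⟩)
          rw [hcons v hvs hvt] at h1
          refine h1.trans (Finset.sup_le ?_)
          rintro ⟨a, w⟩ he
          obtain ⟨hEaw, hav⟩ := (my_mem_edgesOutOf E).1 he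
          simp only at hav
          subst hav
          exact ih w hEaw a hvS hEaw
        · exact Finset.le_sup (f := fun e : V × V => φ₀ e.1 e.2)
            ((my_mem_crossEdges E (e := (u, v))).2 ⟨huv, hu, hvS⟩)
    calc flowValBot E s φ₀ = (edgesOutOf E s).sup (fun e => φ₀ e.1 e.2) := rfl
      _ ≤ (crossEdges E S).sup (fun e => φ₀ e.1 e.2) := by
          apply Finset.sup_le
          rintro ⟨a, w⟩ he
          obtain ⟨hEaw, hav⟩ := (my_mem_edgesOutOf E).1 he
          simp only at hav
          exact key w a (by rw [hav]; exact hsS) hEaw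
      _ ≤ (crossEdges E S).sup (fun e => c e.1 e.2) := by
          apply Finset.sup_le
          intro e he
          have hE : E e.1 e.2 := ((my_mem_crossEdges E).1 he).1
          exact le_trans (hcap _ _ hE)
            (Finset.le_sup (f := fun e : V × V => c e.1 e.2) he)
  · -- least: any upper bound dominates the cut meet
    intro b hb
    have hFb : (pathFinset E s t).sup (fun p => pathMeet c ⊥ p.1) ≤ b := by
      rw [← myPhi_val E s t c hG.ne]
      exact hb ⟨myPhi E s t c, myPhi_isFlow E s t c hG.ne, rfl⟩
    refine le_trans ?_ hFb
    apply my_infSup_le (cutFinset_nonempty hG.ne) (fun S => crossEdges E S)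
      (fun e => c e.1 e.2)
    intro sel hsel
    set r : V → V → Prop := fun u v => ∃ S ∈ cutFinset s t, sel S = (u, v) with hr
    have hrE : ∀ u v, r u v → E u v := by
      rintro u v ⟨S, hS, hsel'⟩
      have h := (my_mem_crossEdges E).1 (hsel S hS)
      rw [hsel'] at h
      exact h.1
    have ht : Relation.ReflTransGen r s t := by
      by_contra hcon
      set Sr : Finset V := Finset.univ.filter (fun v => Relation.ReflTransGen r s v) with hSr
      have hSrc : Sr ∈ cutFinset s t := by
        refine (my_mem_cutFinset s t).2 ⟨?_, ?_⟩
        · simp only [hSr, Finset.mem_filter, Finset.mem_univ, true_and]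
          exact Relation.ReflTransGen.refl
        · simp only [hSr, Finset.mem_filter, Finset.mem_univ, true_and]
          exact hcon
      have hcr := (my_mem_crossEdges E).1 (hsel Sr hSrc)
      obtain ⟨hE1, h1, h2⟩ := hcr
      apply h2
      simp only [hSr, Finset.mem_filter, Finset.mem_univ, true_and] at h1 ⊢
      exact h1.tail ⟨Sr, hSrc, rfl⟩
    obtain ⟨l, hchain, hlast⟩ := List.exists_isChain_cons_of_relationReflTransGen ht
    have hchain' : (s :: l).Chain' r := hchain
    have hchainE : (s :: l).Chain' E := List.IsChain.imp (fun a b h => hrE a b h) hchain'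
    have hnodup : (s :: l).Nodup := my_nodup_of_chain' hG.acyclic hchainE
    have hlne : l ≠ [] := by
      rintro rfl
      exact hG.ne (by simpa using hlast)
    have hpath : IsSTPath E s t (s :: l) := by
      refine ⟨hchainE, rfl, ?_, hnodup⟩
      rw [List.getLast?_eq_getLast (List.cons_ne_nil _ _)]
      exact congrArg some hlast
    have hpP : (⟨s :: l, hnodup⟩ : {l : List V // l.Nodup}) ∈ pathFinset E s t :=
      (my_mem_pathFinset E s t).2 hpath
    have hedges_ne : pathEdges (s :: l) ≠ [] := by
      intro hnil
      obtain ⟨w, _, hmem⟩ := my_edge_out hpath List.mem_cons_self hG.ne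
      rw [hnil] at hmem
      simp at hmem
    have hle : (cutFinset s t).inf' (cutFinset_nonempty hG.ne)
        (fun S => c (sel S).1 (sel S).2) ≤ pathMeet c ⊥ (s :: l) := by
      apply my_le_pathMeet c ⊥ hedges_ne
      intro u v hmem
      obtain ⟨i, hi, h1, h2⟩ := my_mem_pathEdges.1 hmem
      have hruv : r u v := by
        have h := List.isChain_iff_getElem.1 hchain' i (by omega)
        rwa [h1, h2] at h
      obtain ⟨S, hS, hselS⟩ := hruv
      have h := Finset.inf'_le (fun S => c (sel S).1 (sel S).2) hS
      rwa [hselS] at h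
    exact hle.trans
      (Finset.le_sup (f := fun p : {l : List V // l.Nodup} => pathMeet c ⊥ p.1) hpP)
end
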